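/- arXiv:1309.6771 — 10 statements merged into one kernel-verified Lean document; each statement's English description precedes it below -/
import Mathlib

section
/- Let A be an n×n real matrix. Then A is a P0-matrix (all principal minors nonnegative) if and only if A + D is nonsingular for every positive diagonal matrix D. -/
open Matrix Finset Polynomial Filter

/-- Principal minor of `A` on the finset `s`. -/
noncomputable def pm {n : ℕ} (A : Matrix (Fin n) (Fin n) ℝ) (s : Finset (Fin n)) : ℝ :=
  (A.submatrix (fun i : {x // x ∈ s} => (i : Fin n))
    (fun i : {x // x ∈ s} => (i : Fin n))).det

lemma pm_empty {n : ℕ} (A : Matrix (Fin n) (Fin n) ℝ) : pm A ∅ = 1 := by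
  haveI : IsEmpty {x // x ∈ (∅ : Finset (Fin n))} := by
    constructor; rintro ⟨x, hx⟩; simp at hx
  simp [pm]

/-- Key expansion: determinant of `A + diagonal d` as a sum of principal minors. -/
lemma det_add_diagonal {n : ℕ} (A : Matrix (Fin n) (Fin n) ℝ) (d : Fin n → ℝ) :
    (A + Matrix.diagonal d).det
      = ∑ s : Finset (Fin n), (∏ i ∈ sᶜ, d i) * pm A s := by
  have hmain : (A + Matrix.diagonal d).det
      = ∑ s : Finset (Fin n), (Matrix.detRowAlternating (s.piecewise A (Matrix.diagonal d)) : ℝ) := by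
    exact Matrix.detRowAlternating.toMultilinearMap.map_add_univ A (Matrix.diagonal d)
  rw [hmain]
  refine Finset.sum_congr rfl fun s _ => ?_
  classical
  set m : Fin n → (Fin n → ℝ) :=
    sᶜ.piecewise (fun j => (Pi.single j 1 : Fin n → ℝ)) A with hm
  have hpiece : s.piecewise A (Matrix.diagonal d) = sᶜ.piecewise (fun i => d i • m i) m := by
    funext i
    by_cases hi : i ∈ s
    · erw [Finset.piecewise_eq_of_mem _ _ _ hi,
        Finset.piecewise_eq_of_notMem _ _ _ (by simp [hi]), hm,
        Finset.piecewise_eq_of_notMem _ _ _ (by simp [hi])]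
    · erw [Finset.piecewise_eq_of_notMem _ _ _ hi,
        Finset.piecewise_eq_of_mem _ _ _ (by simp [hi]), hm,
        Finset.piecewise_eq_of_mem _ _ _ (by simp [hi])]
      funext j
      simp [Matrix.diagonal_apply, Pi.single_apply, eq_comm]
  have hsmul : (Matrix.detRowAlternating (sᶜ.piecewise (fun i => d i • m i) m) : ℝ)
      = (∏ i ∈ sᶜ, d i) • (Matrix.detRowAlternating m : ℝ) :=
    Matrix.detRowAlternating.toMultilinearMap.map_piecewise_smul d m sᶜ
  rw [hpiece, hsmul, smul_eq_mul]
  congr 1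
  -- det of the matrix m equals the principal minor on s
  have hdm : (Matrix.detRowAlternating m : ℝ) = Matrix.det (Matrix.of m) := rfl
  rw [hdm]
  set e : {x // x ∈ s} ⊕ {x // ¬ x ∈ s} ≃ Fin n := Equiv.sumCompl (fun x => x ∈ s) with he
  rw [← Matrix.det_submatrix_equiv_self e (Matrix.of m)]
  have hblocks : (Matrix.of m).submatrix e e =
      Matrix.fromBlocks
        (A.submatrix (fun i : {x // x ∈ s} => (i : Fin n)) (fun i : {x // x ∈ s} => (i : Fin n)))
        (A.submatrix (fun i : {x // x ∈ s} => (i : Fin n)) (fun i : {x // ¬ x ∈ s} => (i : Fin n)))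
        0 1 := by
    ext i j
    cases i with
    | inl a =>
      have ha : ¬ (a : Fin n) ∈ sᶜ := by simp [a.2]
      cases j with
      | inl b =>
        simp only [Matrix.submatrix_apply, he, Equiv.sumCompl_apply_inl, Matrix.of_apply, hm,
          Finset.piecewise_eq_of_notMem _ _ _ ha, Matrix.fromBlocks_apply₁₁,
          Matrix.submatrix_apply]
        erw [Finset.piecewise_eq_of_notMem _ _ _ ha]
      | inr b =>
        simp only [Matrix.submatrix_apply, he, Equiv.sumCompl_apply_inl,
          Equiv.sumCompl_apply_inr, Matrix.of_apply, hm,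
          Finset.piecewise_eq_of_notMem _ _ _ ha, Matrix.fromBlocks_apply₁₂,
          Matrix.submatrix_apply]
        erw [Finset.piecewise_eq_of_notMem _ _ _ ha]
    | inr a =>
      have ha : (a : Fin n) ∈ sᶜ := by simp [a.2]
      cases j with
      | inl b =>
        have hne : ¬ ((b : Fin n) = (a : Fin n)) := by
          intro hh
          exact a.2 (hh ▸ b.2)
        simp only [Matrix.submatrix_apply, he, Equiv.sumCompl_apply_inl,
          Equiv.sumCompl_apply_inr, Matrix.of_apply, hm,
          Finset.piecewise_eq_of_mem _ _ _ ha, Matrix.fromBlocks_apply₂₁,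
          Pi.single_apply, hne, if_false, Matrix.zero_apply]
        erw [Finset.piecewise_eq_of_mem _ _ _ ha]
        simp [Pi.single_apply, hne]
      | inr b =>
        have : ((b : Fin n) = (a : Fin n)) ↔ a = b := by
          constructor
          · intro hh; exact Subtype.ext hh.symm
          · intro hh; rw [hh]
        simp only [Matrix.submatrix_apply, he, Equiv.sumCompl_apply_inr, Matrix.of_apply, hm,
          Finset.piecewise_eq_of_mem _ _ _ ha, Matrix.fromBlocks_apply₂₂,
          Pi.single_apply, Matrix.one_apply, this]
        erw [Finset.piecewise_eq_of_mem _ _ _ ha]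
        simp [Pi.single_apply, this]
  rw [hblocks, Matrix.det_fromBlocks_zero₂₁, Matrix.det_one, mul_one, pm]

lemma pm_image {n : ℕ} (A : Matrix (Fin n) (Fin n) ℝ) {k : ℕ} (α : Fin k → Fin n)
    (hα : StrictMono α) : pm A (Finset.image α Finset.univ) = (A.submatrix α α).det := by
  classical
  set s := Finset.image α Finset.univ with hs
  have hcard : s.card = k := by
    rw [hs, Finset.card_image_of_injective _ hα.injective, Finset.card_univ, Fintype.card_fin]
  have hαeq : α = ⇑(s.orderEmbOfFin hcard) :=
    Finset.orderEmbOfFin_unique hcard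
      (fun x => Finset.mem_image_of_mem _ (Finset.mem_univ x)) hα
  set e : Fin k ≃ {x // x ∈ s} := (s.orderIsoOfFin hcard).toEquiv with he
  rw [pm, ← Matrix.det_submatrix_equiv_self e]
  congr 1
  ext i j
  simp only [Matrix.submatrix_apply, he, RelIso.coe_fn_toEquiv,
    Finset.coe_orderIsoOfFin_apply, hαeq]

lemma pm_nonneg_of_minors {n : ℕ} (A : Matrix (Fin n) (Fin n) ℝ)
    (hP : ∀ (k : ℕ) (α : Fin k → Fin n), StrictMono α → 0 ≤ (A.submatrix α α).det)
    (s : Finset (Fin n)) : 0 ≤ pm A s := by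
  classical
  have himg : Finset.image (⇑(s.orderEmbOfFin rfl)) Finset.univ = s := by
    apply Finset.coe_injective
    rw [Finset.coe_image, Finset.coe_univ, Set.image_univ, Finset.range_orderEmbOfFin]
  have := pm_image A (⇑(s.orderEmbOfFin rfl)) (s.orderEmbOfFin rfl).strictMono
  rw [himg] at this
  rw [this]
  exact hP _ _ (s.orderEmbOfFin rfl).strictMono

lemma coeff_nonneg_of_pos (P : Polynomial ℝ) (N : ℕ) (hdeg : P.degree ≤ N)
    (hpos : ∀ t : ℝ, 0 < t → 0 < P.eval t) : 0 ≤ P.coeff N := by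
  by_contra hneg
  push_neg at hneg
  have hne : P.coeff N ≠ 0 := ne_of_lt hneg
  have hdeg' : P.degree = N := le_antisymm hdeg (Polynomial.le_degree_of_ne_zero hne)
  have hnat : P.natDegree = N := Polynomial.natDegree_eq_of_degree_eq_some hdeg'
  have hlead : P.leadingCoeff = P.coeff N := by rw [Polynomial.leadingCoeff, hnat]
  rcases Nat.eq_zero_or_pos N with hN | hN
  · subst hN
    have hC := Polynomial.eq_C_of_natDegree_eq_zero hnat
    have : P.eval 1 = P.coeff 0 := by rw [hC]; simp
    linarith [hpos 1 one_pos]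
  · have hdegpos : 0 < P.degree := by
      rw [hdeg']; exact_mod_cast hN
    have htend := P.tendsto_atBot_of_leadingCoeff_nonpos hdegpos (by rw [hlead]; exact hneg.le)
    have h1 : ∀ᶠ t : ℝ in atTop, P.eval t < 0 := htend.eventually_lt_atBot 0
    have h2 : ∀ᶠ t : ℝ in atTop, 0 < t := eventually_gt_atTop 0
    rcases (h1.and h2).exists with ⟨t, ht1, ht2⟩
    exact absurd (hpos t ht2) (not_lt.mpr ht1.le)

/-- A square real matrix is a P0-matrix (all principal minors nonnegative) iff
`A + D` is nonsingular for every positive diagonal matrix `D`. -/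
theorem stmt_0 (n : ℕ) (A : Matrix (Fin n) (Fin n) ℝ) :
    (∀ (k : ℕ) (α : Fin k → Fin n), StrictMono α → 0 ≤ (A.submatrix α α).det) ↔
    (∀ d : Fin n → ℝ, (∀ i, 0 < d i) → (A + Matrix.diagonal d).det ≠ 0) := by
  classical
  constructor
  · intro hP d hd
    have key := det_add_diagonal A d
    have hpos : 0 < (A + Matrix.diagonal d).det := by
      rw [key]
      refine Finset.sum_pos'
        (fun s _ => mul_nonneg (Finset.prod_nonneg fun i _ => (hd i).le)
          (pm_nonneg_of_minors A hP s)) ⟨∅, Finset.mem_univ _, ?_⟩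
      rw [pm_empty, mul_one, Finset.compl_empty]
      exact Finset.prod_pos fun i _ => hd i
    exact ne_of_gt hpos
  · intro h
    -- Step 1: the determinant is in fact positive for every positive diagonal perturbation.
    have hpos : ∀ d : Fin n → ℝ, (∀ i, 0 < d i) → 0 < (A + Matrix.diagonal d).det := by
      rcases Nat.eq_zero_or_pos n with hn | hn
      · intro d hd
        haveI : IsEmpty (Fin n) := by subst hn; infer_instance
        simp [Matrix.det_isEmpty]
      -- construct T with positive determinant via the monic polynomial Q
      set Q : Polynomial ℝ := ∑ s : Finset (Fin n), C (pm A s) * X ^ (sᶜ.card) with hQ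
      have hQeval : ∀ T : ℝ, Q.eval T = (A + Matrix.diagonal (fun _ => T)).det := by
        intro T
        rw [det_add_diagonal, hQ]
        simp only [Polynomial.eval_finset_sum, Polynomial.eval_mul, Polynomial.eval_C,
          Polynomial.eval_pow, Polynomial.eval_X, Finset.prod_const]
        exact Finset.sum_congr rfl fun s _ => mul_comm _ _
      have hcomplcard : ∀ s : Finset (Fin n), sᶜ.card = n ↔ s = ∅ := by
        intro s
        constructor
        · intro hc
          have : sᶜ = Finset.univ := by
            apply Finset.eq_univ_of_card
            rw [hc, Fintype.card_fin]
          simpa [Finset.compl_eq_univ_iff] using this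
        · rintro rfl; simp [Finset.card_compl, Fintype.card_fin]
      have hQcoeff : Q.coeff n = 1 := by
        rw [hQ, Polynomial.finset_sum_coeff]
        simp only [Polynomial.coeff_C_mul, Polynomial.coeff_X_pow]
        rw [Finset.sum_eq_single (∅ : Finset (Fin n))]
        · rw [pm_empty]
          have : (∅ : Finset (Fin n))ᶜ.card = n := (hcomplcard ∅).mpr rfl
          simp [this]
        · intro s _ hs
          have : ¬ (n = sᶜ.card) := by
            intro hc
            exact hs ((hcomplcard s).mp hc.symm)
          simp [this]
        · intro hh; exact absurd (Finset.mem_univ _) hh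
      have hQdeg : Q.degree ≤ (n : ℕ) := by
        rw [hQ]
        refine (Polynomial.degree_sum_le _ _).trans ?_
        rw [Finset.sup_le_iff]
        intro s _
        refine (Polynomial.degree_C_mul_X_pow_le _ _).trans ?_
        exact_mod_cast Nat.cast_le.mpr (by
          calc sᶜ.card ≤ Fintype.card (Fin n) := Finset.card_le_univ _
          _ = n := Fintype.card_fin n)
      have hQdeg' : Q.degree = (n : ℕ) :=
        le_antisymm hQdeg (Polynomial.le_degree_of_ne_zero (by rw [hQcoeff]; exact one_ne_zero))
      have hQlead : Q.leadingCoeff = 1 := by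
        rw [Polynomial.leadingCoeff, Polynomial.natDegree_eq_of_degree_eq_some hQdeg', hQcoeff]
      have htend := Q.tendsto_atTop_of_leadingCoeff_nonneg
        (by rw [hQdeg']; exact_mod_cast hn) (by rw [hQlead]; norm_num)
      have hT : ∃ T : ℝ, 0 < T ∧ 0 < (A + Matrix.diagonal (fun _ => T)).det := by
        have h1 : ∀ᶠ t : ℝ in atTop, 0 < Q.eval t := htend.eventually_gt_atTop 0
        have h2 : ∀ᶠ t : ℝ in atTop, 0 < t := eventually_gt_atTop 0
        rcases (h1.and h2).exists with ⟨T, hT1, hT2⟩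
        exact ⟨T, hT2, by rw [← hQeval]; exact hT1⟩
      rcases hT with ⟨T, hT0, hTdet⟩
      intro d hd
      rcases (h d hd).lt_or_gt with hlt | hgt
      · exfalso
        -- intermediate value argument along the segment from d to the constant vector T
        set c : ℝ → (Fin n → ℝ) := fun θ => fun i => (1 - θ) * d i + θ * T with hc
        have hcpos : ∀ θ ∈ Set.Icc (0:ℝ) 1, ∀ i, 0 < c θ i := by
          intro θ hθ i
          have hceq : c θ i = (1 - θ) * d i + θ * T := rfl
          rcases hθ with ⟨h0, h1⟩
          rw [hceq]
          rcases lt_or_ge θ 1 with hθ1 | hθ1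
          · nlinarith [mul_pos (sub_pos.mpr hθ1) (hd i), mul_nonneg h0 hT0.le]
          · have hθe : θ = 1 := le_antisymm h1 hθ1
            subst hθe
            linarith [hT0]
        set f : ℝ → ℝ := fun θ => (A + Matrix.diagonal (c θ)).det with hf
        have hfc : Continuous f := by
          apply Continuous.matrix_det
          apply Continuous.add continuous_const
          apply Continuous.matrix_diagonal
          exact continuous_pi fun i => by fun_prop
        have hf0 : f 0 < 0 := by
          have hce : c 0 = d := by funext i; show (1 - 0) * d i + 0 * T = d i; ring
          show (A + Matrix.diagonal (c 0)).det < 0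
          rw [hce]; exact hlt
        have hf1 : 0 < f 1 := by
          have hce : c 1 = fun _ => T := by funext i; show (1 - 1) * d i + 1 * T = T; ring
          show 0 < (A + Matrix.diagonal (c 1)).det
          rw [hce]; exact hTdet
        have := intermediate_value_Icc (by norm_num : (0:ℝ) ≤ 1) hfc.continuousOn
        have h0mem : (0:ℝ) ∈ Set.Icc (f 0) (f 1) := ⟨hf0.le, hf1.le⟩
        rcases this h0mem with ⟨θ, hθmem, hfθ⟩
        exact h (c θ) (hcpos θ hθmem) hfθ
      · exact hgt
    -- Step 2: derive nonnegativity of each principal minor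
    intro k α hα
    rw [← pm_image A α hα]
    set s := Finset.image α Finset.univ with hs
    set N := sᶜ.card with hN
    set r : ℝ → ℝ := fun ε => ∑ u : Finset (Fin n),
      ε ^ ((s \ u).card) * pm A u * (if N = (sᶜ \ u).card then 1 else 0) with hr
    have hrpos : ∀ ε : ℝ, 0 < ε → 0 ≤ r ε := by
      intro ε hε
      set P : Polynomial ℝ := ∑ u : Finset (Fin n),
        C (ε ^ ((s \ u).card) * pm A u) * X ^ ((sᶜ \ u).card) with hPdef
      have hPeval : ∀ t : ℝ, P.eval t
          = (A + Matrix.diagonal (fun i => if i ∈ s then ε else t)).det := by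
        intro t
        rw [det_add_diagonal, hPdef]
        rw [Polynomial.eval_finset_sum]
        refine Finset.sum_congr rfl fun u _ => ?_
        have hprod : (∏ i ∈ uᶜ, (if i ∈ s then ε else t))
            = ε ^ ((s \ u).card) * t ^ ((sᶜ \ u).card) := by
          rw [Finset.prod_ite]
          congr 1
          · rw [Finset.prod_const]
            congr 1
            congr 1
            ext x
            simp only [Finset.mem_filter, Finset.mem_compl, Finset.mem_sdiff]
            tauto
          · rw [Finset.prod_const]
            congr 1
            congr 1
            ext x
            simp only [Finset.mem_filter, Finset.mem_compl, Finset.mem_sdiff]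
            tauto
        simp only [Polynomial.eval_mul, Polynomial.eval_C, Polynomial.eval_pow,
          Polynomial.eval_X, hprod]
        ring
      have hPpos : ∀ t : ℝ, 0 < t → 0 < P.eval t := by
        intro t ht
        rw [hPeval]
        apply hpos
        intro i
        by_cases hi : i ∈ s <;> simp [hi, hε, ht]
      have hPdeg : P.degree ≤ (N : ℕ) := by
        rw [hPdef]
        refine (Polynomial.degree_sum_le _ _).trans ?_
        rw [Finset.sup_le_iff]
        intro u _
        refine (Polynomial.degree_C_mul_X_pow_le _ _).trans ?_
        exact_mod_cast Nat.cast_le.mpr (Finset.card_le_card (Finset.sdiff_subset))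
      have hPcoeff : P.coeff N = r ε := by
        simp only [hr]
        rw [hPdef, Polynomial.finset_sum_coeff]
        refine Finset.sum_congr rfl fun u _ => ?_
        rw [Polynomial.coeff_C_mul, Polynomial.coeff_X_pow]
      have := coeff_nonneg_of_pos P N hPdeg hPpos
      rwa [hPcoeff] at this
    have hr0 : r 0 = pm A s := by
      simp only [hr]
      rw [Finset.sum_eq_single s]
      · have h2 : sᶜ \ s = sᶜ := Finset.sdiff_eq_self_iff_disjoint.mpr disjoint_compl_left
        rw [Finset.sdiff_self, Finset.card_empty, pow_zero, h2, if_pos hN, mul_one, one_mul]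
      · intro u _ hu
        by_cases hsub : s ⊆ u
        · have hx : ∃ x, x ∈ u ∧ x ∉ s := by
            by_contra hcon
            push_neg at hcon
            exact hu (le_antisymm (fun x hx => hcon x hx) hsub)
          rcases hx with ⟨x, hxu, hxs⟩
          have hlt : (sᶜ \ u).card < N := by
            rw [hN]
            apply Finset.card_lt_card
            rw [Finset.ssubset_iff_of_subset (Finset.sdiff_subset)]
            exact ⟨x, by simp [hxs], by simp [hxu]⟩
          have : ¬ (N = (sᶜ \ u).card) := by omega
          simp [this]
        · have hne : (s \ u).card ≠ 0 := by
            intro hc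
            rw [Finset.card_eq_zero, Finset.sdiff_eq_empty_iff_subset] at hc
            exact hsub hc
          rw [zero_pow hne]
          ring
      · intro hh; exact absurd (Finset.mem_univ _) hh
    have hrcont : Continuous r := by
      simp only [hr]
      apply continuous_finset_sum
      intro u _
      exact ((continuous_pow _).mul continuous_const).mul continuous_const
    have htends : Tendsto r (nhdsWithin 0 (Set.Ioi (0:ℝ))) (nhds (r 0)) :=
      (hrcont.tendsto 0).mono_left nhdsWithin_le_nhds
    have h0 : 0 ≤ r 0 :=
      ge_of_tendsto htends (eventually_nhdsWithin_of_forall fun ε hε => hrpos ε hε)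
  
    rwa [hr0] at h0
end

section
/- Let A ∈ ℝ^{n×m} and B ∈ ℝ^{m×n}, and suppose that for every k ∈ {1,...,min(n,m)} and every pair of index sets α ⊆ {1,...,n}, β ⊆ {1,...,m} with |α| = |β| = k, the product of minors A[α|β]·B[β|α] is nonnegative. Then AB is a P0-matrix, i.e., every principal minor of AB is nonnegative. -/
open Finset Matrix Equiv

lemma cauchy_binet {k m : ℕ} (C : Matrix (Fin k) (Fin m) ℝ) (D : Matrix (Fin m) (Fin k) ℝ) :
    (C * D).det = ∑ γ ∈ Finset.univ.filter (fun γ : Fin k → Fin m => StrictMono γ),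
      (C.submatrix id γ).det * (D.submatrix γ id).det := by
  have step1 : (C * D).det = ∑ f : Fin k → Fin m, (∏ i, C i (f i)) * (D.submatrix f id).det := by
    have hCD : (C * D) = Matrix.of (fun i => ∑ l, C i l • (fun j => D l j)) := by
      ext i j
      simp [Matrix.mul_apply, Finset.sum_apply]
    rw [hCD]
    have : (Matrix.of (fun i => ∑ l, C i l • (fun j => D l j))).det
        = (Matrix.detRowAlternating (R := ℝ) (n := Fin k)).toMultilinearMap
            (fun i => ∑ l, C i l • (fun j => D l j)) := rfl
    rw [this, MultilinearMap.map_sum]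
    refine Finset.sum_congr rfl fun f _ => ?_
    rw [MultilinearMap.map_smul_univ]
    rfl
  have step2 : (C * D).det = ∑ f ∈ Finset.univ.filter
      (fun f : Fin k → Fin m => Function.Injective f),
      (∏ i, C i (f i)) * (D.submatrix f id).det := by
    rw [step1]
    refine (Finset.sum_subset (Finset.filter_subset _ _) fun f _ hf => ?_).symm
    simp only [Finset.mem_filter, Finset.mem_univ, true_and] at hf
    obtain ⟨i, j, hij, hne⟩ : ∃ i j, f i = f j ∧ i ≠ j := by
      simp only [Function.Injective] at hf; push_neg at hf
      obtain ⟨i, j, h1, h2⟩ := hf; exact ⟨i, j, h1, h2⟩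
    have : (D.submatrix f id).det = 0 := by
      apply Matrix.det_zero_of_row_eq hne
      ext l; simp [hij]
    rw [this, mul_zero]
  have hre : ∀ γ : Fin k → Fin m, (C.submatrix id γ).det * (D.submatrix γ id).det
      = ∑ σ : Perm (Fin k), (∏ i, C i ((γ ∘ σ) i)) * (D.submatrix (γ ∘ σ) id).det := by
    intro γ
    have h1 : (C.submatrix id γ).det
        = ∑ σ : Perm (Fin k), (Equiv.Perm.sign σ : ℝ) * ∏ i, C i (γ (σ i)) := by
      rw [← Matrix.det_transpose, Matrix.det_apply']
      rfl
    rw [h1, Finset.sum_mul]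
    refine Finset.sum_congr rfl fun σ _ => ?_
    have h2 : (D.submatrix (γ ∘ σ) id).det = (Equiv.Perm.sign σ : ℝ) * (D.submatrix γ id).det := by
      have : D.submatrix (γ ∘ σ) id = (D.submatrix γ id).submatrix σ id := rfl
      rw [this, Matrix.det_permute]
    rw [h2]
    simp only [Function.comp_apply]
    ring
  rw [step2]
  symm
  calc ∑ γ ∈ Finset.univ.filter (fun γ : Fin k → Fin m => StrictMono γ),
        (C.submatrix id γ).det * (D.submatrix γ id).det
      = ∑ γ ∈ Finset.univ.filter (fun γ : Fin k → Fin m => StrictMono γ),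
        ∑ σ : Perm (Fin k), (∏ i, C i ((γ ∘ σ) i)) * (D.submatrix (γ ∘ σ) id).det :=
        Finset.sum_congr rfl fun γ _ => hre γ
    _ = ∑ p ∈ (Finset.univ.filter (fun γ : Fin k → Fin m => StrictMono γ)) ×ˢ
          (Finset.univ : Finset (Perm (Fin k))),
        (∏ i, C i ((p.1 ∘ p.2) i)) * (D.submatrix (p.1 ∘ p.2) id).det := by
        rw [Finset.sum_product]
    _ = ∑ f ∈ Finset.univ.filter (fun f : Fin k → Fin m => Function.Injective f),
        (∏ i, C i (f i)) * (D.submatrix f id).det := by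
        refine Finset.sum_bij (fun p _ => p.1 ∘ p.2) ?_ ?_ ?_ ?_
        · rintro ⟨γ, σ⟩ hp
          simp only [Finset.mem_product, Finset.mem_filter, Finset.mem_univ, true_and] at hp ⊢
          exact hp.1.injective.comp σ.injective
        · rintro ⟨γ₁, σ₁⟩ hp₁ ⟨γ₂, σ₂⟩ hp₂ heq
          simp only [Finset.mem_product, Finset.mem_filter, Finset.mem_univ, true_and] at hp₁ hp₂
          dsimp only at heq
          have hrange : Set.range γ₁ = Set.range γ₂ := by
            rw [← σ₁.surjective.range_comp γ₁, heq, σ₂.surjective.range_comp γ₂]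
          haveI : WellFoundedLT (Fin k) := inferInstance
          have hγ : γ₁ = γ₂ := (StrictMono.range_inj (f := γ₁) (g := γ₂) hp₁.1 hp₂.1).1 hrange
          subst hγ
          have hσ : (σ₁ : Fin k → Fin k) = σ₂ := by
            funext i
            exact hp₁.1.injective (congrFun heq i)
          simp [Prod.ext_iff, Equiv.ext_iff, funext_iff] at hσ ⊢
          exact hσ
        · intro f hf
          simp only [Finset.mem_filter, Finset.mem_univ, true_and] at hf
          set s : Finset (Fin m) := Finset.univ.image f with hs_def
          have hs : s.card = k := by
            rw [hs_def, Finset.card_image_of_injective _ hf, Finset.card_univ, Fintype.card_fin]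
          set γ : Fin k → Fin m := fun i => s.orderEmbOfFin hs i with hγ_def
          have hγmono : StrictMono γ := (s.orderEmbOfFin hs).strictMono
          have hfmem : ∀ i, f i ∈ s := fun i => Finset.mem_image_of_mem f (Finset.mem_univ i)
          have hγmem : ∀ i, γ i ∈ s := fun i => Finset.orderEmbOfFin_mem s hs i
          have hcard : Fintype.card s = k := by simp [hs]
          have hbf : Function.Bijective (fun i : Fin k => (⟨f i, hfmem i⟩ : s)) := by
            rw [Fintype.bijective_iff_injective_and_card]
            exact ⟨fun a b hab => hf (congrArg Subtype.val hab), by simp [hcard]⟩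
          have hbγ : Function.Bijective (fun i : Fin k => (⟨γ i, hγmem i⟩ : s)) := by
            rw [Fintype.bijective_iff_injective_and_card]
            exact ⟨fun a b hab => hγmono.injective (congrArg Subtype.val hab), by simp [hcard]⟩
          refine ⟨⟨γ, (Equiv.ofBijective _ hbf).trans (Equiv.ofBijective _ hbγ).symm⟩, ?_, ?_⟩
          · simp [Finset.mem_product, hγmono]
          · funext i
            show γ (((Equiv.ofBijective _ hbγ).symm (Equiv.ofBijective _ hbf i) : Fin k)) = f i
            have := congrArg Subtype.val
              ((Equiv.ofBijective _ hbγ).apply_symm_apply (Equiv.ofBijective _ hbf i))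
            exact this
        · intro p hp
          rfl

/-- If all products of corresponding minors `A[α|β]·B[β|α]` are nonnegative,
then `A*B` is a P0-matrix. -/
theorem stmt_1 (n m : ℕ) (A : Matrix (Fin n) (Fin m) ℝ) (B : Matrix (Fin m) (Fin n) ℝ)
    (h : ∀ (k : ℕ) (α : Fin k → Fin n) (β : Fin k → Fin m), StrictMono α → StrictMono β →
      0 ≤ (A.submatrix α β).det * (B.submatrix β α).det) :
    ∀ (k : ℕ) (α : Fin k → Fin n), StrictMono α → 0 ≤ ((A * B).submatrix α α).det := by
  intro k α hα
  have hsub : (A * B).submatrix α α = (A.submatrix α id) * (B.submatrix id α) := by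
    ext i j
    simp [Matrix.mul_apply]
  rw [hsub, cauchy_binet]
  refine Finset.sum_nonneg fun γ hγ => ?_
  simp only [Finset.mem_filter, Finset.mem_univ, true_and] at hγ
  have : (A.submatrix α id).submatrix id γ = A.submatrix α γ := rfl
  have h2 : (B.submatrix id α).submatrix γ id = B.submatrix γ α := rfl
  rw [this, h2]
  exact h k α γ hα hγ
end

section
/- Let A ∈ ℝ^{n×m} have rank r ≥ 1 and B ∈ ℝ^{m×n}. Then the sum of all r×r principal minors of AB is nonzero if and only if rank(A·B·A) = r. -/
/-- The sum of the `r×r` principal minors of a square matrix `M`. -/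
def sumPrincMinors {N : ℕ} (r : ℕ) (M : Matrix (Fin N) (Fin N) ℝ) : ℝ :=
  ∑ s : Finset (Fin N),
    if h : s.card = r then
      (M.submatrix (⇑(s.orderEmbOfFin h)) (⇑(s.orderEmbOfFin h))).det
    else 0


lemma cauchyBinet {r n : ℕ} (D : Matrix (Fin r) (Fin n) ℝ) (C : Matrix (Fin n) (Fin r) ℝ) :
    (D * C).det = ∑ s : Finset (Fin n), if h : s.card = r then
      (D.submatrix id ⇑(s.orderEmbOfFin h)).det * (C.submatrix (⇑(s.orderEmbOfFin h)) id).det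
    else 0 := by
  classical
  have hmain : (D * C).det
      = ∑ f : Fin r → Fin n, (∏ i, C (f i) i) * (D.submatrix id f).det := by
    simp only [Matrix.det_apply', Matrix.mul_apply, Finset.prod_univ_sum, Finset.mul_sum,
      Fintype.piFinset_univ]
    rw [Finset.sum_comm]
    refine Finset.sum_congr rfl fun f _ => ?_
    refine Finset.sum_congr rfl fun σ _ => ?_
    simp only [Matrix.submatrix_apply, id_eq, Finset.prod_mul_distrib]
    ring
  have hzero : ∀ f : Fin r → Fin n, ¬ Function.Injective f →
      (∏ i, C (f i) i) * (D.submatrix id f).det = 0 := by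
    intro f hf
    obtain ⟨i, j, hij, hne⟩ := Function.not_injective_iff.mp hf
    rw [Matrix.det_zero_of_column_eq hne fun k => by simp [hij], mul_zero]
  have hfilter : (D * C).det = ∑ f ∈ Finset.univ.filter (fun f : Fin r → Fin n =>
      Function.Injective f), (∏ i, C (f i) i) * (D.submatrix id f).det := by
    rw [hmain]
    refine (Finset.sum_filter_of_ne fun f _ hne => ?_).symm
    by_contra hinj
    exact hne (hzero f hinj)
  rw [hfilter, ← Finset.sum_fiberwise_of_maps_to
    (g := fun f : Fin r → Fin n => Finset.image f Finset.univ)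
    (fun f _ => Finset.mem_univ _)]
  refine Finset.sum_congr rfl fun s _ => ?_
  by_cases h : s.card = r
  · rw [dif_pos h]
    set emb := s.orderEmbOfFin h with hemb
    have himg : Finset.image (⇑emb) Finset.univ = s := by
      ext a
      simp only [Finset.mem_image, Finset.mem_univ, true_and]
      constructor
      · rintro ⟨i, rfl⟩; exact s.orderEmbOfFin_mem h i
      · intro ha
        have hr' : a ∈ Set.range ⇑emb := by rw [s.range_orderEmbOfFin h]; exact ha
        exact hr'
    have hstep : (∑ f ∈ (Finset.univ.filter fun f : Fin r → Fin n => Function.Injective f)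
          |>.filter (fun f => Finset.image f Finset.univ = s),
        (∏ i, C (f i) i) * (D.submatrix id f).det)
        = ∑ σ : Equiv.Perm (Fin r),
            (∏ i, C (emb (σ i)) i) * (D.submatrix id (⇑emb ∘ ⇑σ)).det := by
      refine (Finset.sum_bij (fun (σ : Equiv.Perm (Fin r)) _ => ⇑emb ∘ ⇑σ) ?_ ?_ ?_ ?_).symm
      · intro σ _
        simp only [Finset.mem_filter, Finset.mem_univ, true_and]
        constructor
        · exact emb.injective.comp σ.injective
        · rw [← Finset.image_image, Finset.image_univ_equiv, himg]
      · intro σ₁ _ σ₂ _ hcomp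
        exact Equiv.ext fun i => emb.injective (congrFun hcomp i)
      · intro f hf
        simp only [Finset.mem_filter, Finset.mem_univ, true_and] at hf
        obtain ⟨hinj, himgf⟩ := hf
        have hmem : ∀ i, f i ∈ s := fun i => by
          rw [← himgf]; exact Finset.mem_image_of_mem f (Finset.mem_univ i)
        set σ0 : Fin r → Fin r := fun i => (s.orderIsoOfFin h).symm ⟨f i, hmem i⟩ with hσ0
        have hembσ0 : ∀ i, emb (σ0 i) = f i := by
          intro i
          have : (s.orderIsoOfFin h) (σ0 i) = ⟨f i, hmem i⟩ := by
            simp [hσ0]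
          have := congrArg Subtype.val this
          simpa [hemb, Finset.coe_orderIsoOfFin_apply] using this
        have hσ0inj : Function.Injective σ0 := by
          intro i j hij
          apply hinj
          rw [← hembσ0 i, ← hembσ0 j, hij]
        refine ⟨Equiv.ofBijective σ0 (Finite.injective_iff_bijective.mp hσ0inj),
          Finset.mem_univ _, ?_⟩
        exact funext fun i => hembσ0 i
      · intro σ _
        rfl
    rw [hstep]
    have hdet : ∀ σ : Equiv.Perm (Fin r), (D.submatrix id (⇑emb ∘ ⇑σ)).det
        = (Equiv.Perm.sign σ : ℝ) * (D.submatrix id ⇑emb).det := by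
      intro σ
      have : D.submatrix id (⇑emb ∘ ⇑σ) = (D.submatrix id ⇑emb).submatrix id ⇑σ := by
        rw [Matrix.submatrix_submatrix]
        rfl
      rw [this, Matrix.det_permute']
    rw [Matrix.det_apply' (C.submatrix (⇑emb) id), Finset.mul_sum]
    refine Finset.sum_congr rfl fun σ _ => ?_
    rw [hdet σ]
    simp only [Matrix.submatrix_apply, id_eq]
    ring
  · rw [dif_neg h]
    refine Finset.sum_eq_zero fun f hf => ?_
    simp only [Finset.mem_filter, Finset.mem_univ, true_and] at hf
    obtain ⟨hinj, himgf⟩ := hf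
    exact absurd (by rw [← himgf, Finset.card_image_of_injective _ hinj, Finset.card_univ,
      Fintype.card_fin]) h

lemma sumPrincMinors_mul {r n : ℕ} (C : Matrix (Fin n) (Fin r) ℝ)
    (D : Matrix (Fin r) (Fin n) ℝ) :
    sumPrincMinors r (C * D) = (D * C).det := by
  rw [cauchyBinet, sumPrincMinors]
  refine Finset.sum_congr rfl fun s _ => ?_
  by_cases h : s.card = r
  · rw [dif_pos h, dif_pos h]
    have hsub : (C * D).submatrix (⇑(s.orderEmbOfFin h)) (⇑(s.orderEmbOfFin h))
        = (C.submatrix (⇑(s.orderEmbOfFin h)) id) * (D.submatrix id (⇑(s.orderEmbOfFin h))) := by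
      ext i j
      simp [Matrix.mul_apply]
    rw [hsub, Matrix.det_mul, mul_comm]
  · rw [dif_neg h, dif_neg h]

lemma rank_mul_left_of_inj {k r n : ℕ} (C : Matrix (Fin n) (Fin r) ℝ)
    (hC : Function.Injective C.mulVecLin) (X : Matrix (Fin r) (Fin k) ℝ) :
    (C * X).rank = X.rank := by
  rw [Matrix.rank, Matrix.rank, Matrix.mulVecLin_mul, LinearMap.range_comp]
  exact (Submodule.equivMapOfInjective _ hC _).finrank_eq.symm

lemma rank_mul_right_of_surj {k r m : ℕ} (F : Matrix (Fin r) (Fin m) ℝ)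
    (hF : Function.Surjective F.mulVecLin) (X : Matrix (Fin k) (Fin r) ℝ) :
    (X * F).rank = X.rank := by
  rw [Matrix.rank, Matrix.rank, Matrix.mulVecLin_mul,
    LinearMap.range_comp_of_range_eq_top _ (LinearMap.range_eq_top.mpr hF)]

lemma det_ne_zero_iff_rank_eq {r : ℕ} (M : Matrix (Fin r) (Fin r) ℝ) :
    M.det ≠ 0 ↔ M.rank = r := by
  constructor
  · intro h
    have := Matrix.rank_of_isUnit M ((Matrix.isUnit_iff_isUnit_det M).mpr
      (isUnit_iff_ne_zero.mpr h))
    simpa using this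
  · intro h hdet
    have hsurj : Function.Surjective M.mulVecLin := by
      rw [← LinearMap.range_eq_top]
      apply Submodule.eq_top_of_finrank_eq
      rw [← Matrix.rank, h, Module.finrank_fintype_fun_eq_card, Fintype.card_fin]
    have hunit : IsUnit M := Matrix.mulVec_surjective_iff_isUnit.mp hsurj
    exact ((Matrix.isUnit_iff_isUnit_det M).mp hunit).ne_zero hdet

lemma exists_factorization (n m : ℕ) (A : Matrix (Fin n) (Fin m) ℝ) :
    ∃ (C : Matrix (Fin n) (Fin A.rank) ℝ) (F : Matrix (Fin A.rank) (Fin m) ℝ),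
      A = C * F ∧ Function.Injective C.mulVecLin ∧ Function.Surjective F.mulVecLin := by
  classical
  set L := A.mulVecLin with hL
  have hrk : Module.finrank ℝ (LinearMap.range L) = A.rank := rfl
  let b : Module.Basis (Fin A.rank) ℝ (LinearMap.range L) :=
    Module.finBasisOfFinrankEq ℝ _ hrk
  refine ⟨Matrix.of fun j i => (b i : Fin n → ℝ) j,
    Matrix.of fun i j => b.repr (L.rangeRestrict (Pi.single j 1)) i, ?_, ?_, ?_⟩
  · ext j k
    rw [Matrix.mul_apply]
    have h1 : (∑ i, Matrix.of (fun j i => (b i : Fin n → ℝ) j) j i *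
          Matrix.of (fun i j => b.repr (L.rangeRestrict (Pi.single j 1)) i) i k)
        = ((∑ i, b.repr (L.rangeRestrict (Pi.single k 1)) i • b i : LinearMap.range L)
            : Fin n → ℝ) j := by
      rw [AddSubmonoidClass.coe_finset_sum]
      rw [Finset.sum_apply]
      refine Finset.sum_congr rfl fun i _ => ?_
      simp [mul_comm]
    rw [h1, b.sum_repr]
    have : ((L.rangeRestrict (Pi.single k 1) : LinearMap.range L) : Fin n → ℝ)
        = L (Pi.single k 1) := rfl
    rw [this, hL]
    simp [Matrix.mulVecLin_apply, Matrix.mulVec_single]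
  · intro x y hxy
    have hval : ∀ x : Fin A.rank → ℝ,
        (Matrix.of fun j i => (b i : Fin n → ℝ) j).mulVecLin x
          = ((b.equivFun.symm x : LinearMap.range L) : Fin n → ℝ) := by
      intro x
      ext j
      rw [Module.Basis.equivFun_symm_apply, AddSubmonoidClass.coe_finset_sum, Finset.sum_apply]
      simp [Matrix.mulVecLin_apply, Matrix.mulVec, dotProduct, mul_comm]
    rw [hval, hval] at hxy
    exact b.equivFun.symm.injective (Subtype.coe_injective hxy)
  · have hFlin : (Matrix.of fun i j => b.repr (L.rangeRestrict (Pi.single j 1)) i).mulVecLin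
        = (b.equivFun : LinearMap.range L ≃ₗ[ℝ] (Fin A.rank → ℝ)).toLinearMap
          ∘ₗ L.rangeRestrict := by
      apply (Pi.basisFun ℝ (Fin m)).ext
      intro j
      ext i
      simp [Matrix.mulVecLin_apply, Matrix.mulVec_single, Module.Basis.equivFun_apply]
    rw [hFlin]
    exact b.equivFun.surjective.comp L.surjective_rangeRestrict

/-- For `A` of rank `r ≥ 1`, the reduced determinant `det_A(AB)` (the sum of the
`r×r` principal minors of `AB`) is nonzero iff `rank (A*B*A) = r`. -/
theorem stmt_3 (n m : ℕ) (A : Matrix (Fin n) (Fin m) ℝ) (B : Matrix (Fin m) (Fin n) ℝ)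
    (hr : 1 ≤ A.rank) :
    sumPrincMinors A.rank (A * B) ≠ 0 ↔ (A * B * A).rank = A.rank := by

  obtain ⟨C, F, hA, hCinj, hFsurj⟩ := exists_factorization n m A
  have h1 : sumPrincMinors A.rank (A * B) = (F * B * C).det := by
    have hAB : A * B = C * (F * B) := by
      conv_lhs => rw [hA]
      rw [Matrix.mul_assoc]
    rw [hAB, sumPrincMinors_mul C (F * B)]
  have h2 : (A * B * A).rank = (F * B * C).rank := by
    conv_lhs => rw [hA]
    have hre : C * F * B * (C * F) = C * ((F * B * C) * F) := by
      simp only [Matrix.mul_assoc]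
    rw [hre, rank_mul_left_of_inj C hCinj, rank_mul_right_of_surj F hFsurj]
  rw [h1, h2]
  exact det_ne_zero_iff_rank_eq _
end

section
/- Let A ∈ ℝ^{n×m} have rank r ≥ 1 and B ∈ ℝ^{m×n}. The reduced determinant det_A(AB) (the sum of the r×r principal minors of AB) is nonzero if and only if im(BA) ⊕ ker(A) = ℝ^m, which holds if and only if im(A) ⊕ ker(AB) = ℝ^n. -/
open Matrix Finset Equiv Function Module

variable {n r : ℕ}

lemma det_mul_expand (Q : Matrix (Fin r) (Fin n) ℝ) (C : Matrix (Fin n) (Fin r) ℝ) :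
    (Q * C).det = ∑ f : Fin r → Fin n, (∏ j, C (f j) j) * (Q.submatrix id f).det := by
  classical
  calc (Q * C).det
      = ∑ σ : Equiv.Perm (Fin r), ((Equiv.Perm.sign σ : ℤ) : ℝ) * ∏ j, ∑ k, Q (σ j) k * C k j := by
        simp [Matrix.det_apply', Matrix.mul_apply]
    _ = ∑ σ : Equiv.Perm (Fin r), ∑ f : Fin r → Fin n,
          ((Equiv.Perm.sign σ : ℤ) : ℝ) * ∏ j, Q (σ j) (f j) * C (f j) j := by
        simp only [Finset.prod_univ_sum, Fintype.piFinset_univ, Finset.mul_sum]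
    _ = ∑ f : Fin r → Fin n, ∑ σ : Equiv.Perm (Fin r),
          ((Equiv.Perm.sign σ : ℤ) : ℝ) * ∏ j, Q (σ j) (f j) * C (f j) j := Finset.sum_comm
    _ = ∑ f : Fin r → Fin n, (∏ j, C (f j) j) * (Q.submatrix id f).det := by
        refine Finset.sum_congr rfl fun f _ => ?_
        rw [Matrix.det_apply', Finset.mul_sum]
        refine Finset.sum_congr rfl fun σ _ => ?_
        simp only [Finset.prod_mul_distrib, Matrix.submatrix_apply, id_eq]
        ring

lemma sum_fun_eq_sum_finset (G : (Fin r → Fin n) → ℝ) (h0 : ∀ f, ¬Injective f → G f = 0) :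
    ∑ f : Fin r → Fin n, G f
      = ∑ s : Finset (Fin n), if h : s.card = r then
          ∑ g : Equiv.Perm (Fin r), G (s.orderEmbOfFin h ∘ g) else 0 := by
  classical
  have lhs : ∑ f : Fin r → Fin n, G f
      = ∑ f ∈ univ.filter (fun f : Fin r → Fin n => Injective f), G f := by
    refine (Finset.sum_subset (Finset.filter_subset _ _) fun f _ hf => ?_).symm
    exact h0 f (by simpa using hf)
  have rhs : (∑ p ∈ (univ : Finset (Finset (Fin n) × Equiv.Perm (Fin r))).filter
            (fun p => p.1.card = r),
          if h : p.1.card = r then G (p.1.orderEmbOfFin h ∘ p.2) else 0)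
      = ∑ s : Finset (Fin n), if h : s.card = r then
          ∑ g : Equiv.Perm (Fin r), G (s.orderEmbOfFin h ∘ g) else 0 := by
    rw [Finset.sum_subset (Finset.filter_subset _ _)
      (fun p _ hp => dif_neg (by simpa using hp)), Fintype.sum_prod_type]
    refine Finset.sum_congr rfl fun s _ => ?_
    by_cases h : s.card = r
    · simp [h]
    · simp [h]
  rw [lhs, ← rhs]
  refine (Finset.sum_bij (fun p hp => p.1.orderEmbOfFin (Finset.mem_filter.mp hp).2 ∘ p.2)
    ?_ ?_ ?_ ?_).symm
  · -- maps into injective filter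
    intro p hp
    simp only [Finset.mem_filter, Finset.mem_univ, true_and]
    exact (p.1.orderEmbOfFin _).injective.comp p.2.injective
  · -- injectivity
    intro p₁ hp₁ p₂ hp₂ h
    obtain ⟨s₁, g₁⟩ := p₁
    obtain ⟨s₂, g₂⟩ := p₂
    have h₁ := (Finset.mem_filter.mp hp₁).2
    have h₂ := (Finset.mem_filter.mp hp₂).2
    have hs : s₁ = s₂ := by
      apply Finset.coe_injective
      have r₁ := Finset.range_orderEmbOfFin s₁ h₁
      have r₂ := Finset.range_orderEmbOfFin s₂ h₂
      rw [← r₁, ← r₂]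
      have h' : Set.range (s₁.orderEmbOfFin h₁ ∘ g₁) = Set.range (s₂.orderEmbOfFin h₂ ∘ g₂) := by
        rw [h]
      rwa [Set.range_comp, Set.range_comp, Equiv.range_eq_univ, Equiv.range_eq_univ,
        Set.image_univ, Set.image_univ] at h'
    subst hs
    have hg : g₁ = g₂ := by
      apply Equiv.ext
      intro j
      have := congrFun h j
      exact (s₁.orderEmbOfFin h₁).injective this
    rw [hg]
  · -- surjectivity
    intro f hf
    have hf' : Injective f := by simpa using (Finset.mem_filter.mp hf).2
    set s : Finset (Fin n) := univ.image f with hs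
    have hcard : s.card = r := by
      rw [hs, Finset.card_image_of_injective _ hf', Finset.card_univ, Fintype.card_fin]
    have hrange : Set.range f = (s : Set (Fin n)) := by
      rw [hs, Finset.coe_image, Finset.coe_univ, Set.image_univ]
    refine ⟨⟨s, (Equiv.ofInjective f hf').trans ((Equiv.setCongr hrange).trans
      (s.orderIsoOfFin hcard).toEquiv.symm)⟩, Finset.mem_filter.mpr ⟨Finset.mem_univ _, hcard⟩, ?_⟩
    funext j
    simp only [Function.comp_apply, Equiv.trans_apply]
    rw [← Finset.coe_orderIsoOfFin_apply]
    simp [Equiv.setCongr, Equiv.ofInjective]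
    rfl
  · -- value equality
    intro p hp
    rw [dif_pos (Finset.mem_filter.mp hp).2]

lemma cauchy_binet_s4 (Q : Matrix (Fin r) (Fin n) ℝ) (C : Matrix (Fin n) (Fin r) ℝ) :
    (Q * C).det = ∑ s : Finset (Fin n), if h : s.card = r then
      (Q.submatrix id (s.orderEmbOfFin h)).det * (C.submatrix (s.orderEmbOfFin h) id).det
    else 0 := by
  classical
  rw [det_mul_expand, sum_fun_eq_sum_finset
    (fun f => (∏ j, C (f j) j) * (Q.submatrix id f).det) ?_]
  · refine Finset.sum_congr rfl fun s _ => ?_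
    by_cases h : s.card = r
    · rw [dif_pos h, dif_pos h]
      have key : ∀ g : Equiv.Perm (Fin r),
          (Q.submatrix id (s.orderEmbOfFin h ∘ g)).det
            = ((Equiv.Perm.sign g : ℤ) : ℝ) * (Q.submatrix id (s.orderEmbOfFin h)).det := by
        intro g
        have : Q.submatrix id (s.orderEmbOfFin h ∘ g)
            = (Q.submatrix id (s.orderEmbOfFin h)).submatrix id g := by
          ext i j; simp
        rw [this, Matrix.det_permute']
      simp only [key]
      rw [show (C.submatrix (s.orderEmbOfFin h) id).det
          = ∑ g : Equiv.Perm (Fin r), ((Equiv.Perm.sign g : ℤ) : ℝ)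
              * ∏ j, C (s.orderEmbOfFin h (g j)) j from by
        rw [Matrix.det_apply']; rfl]
      rw [Finset.mul_sum]
      refine Finset.sum_congr rfl fun g _ => ?_
      simp only [Function.comp_apply]
      ring
    · rw [dif_neg h, dif_neg h]
  · intro f hf
    have : (Q.submatrix id f).det = 0 := by
      rw [Function.not_injective_iff] at hf
      obtain ⟨i, j, hfij, hij⟩ := hf
      exact Matrix.det_zero_of_column_eq hij fun k => by simp [hfij]
    rw [this, mul_zero]

lemma sumPrincMinors_eq (C : Matrix (Fin n) (Fin r) ℝ) (E : Matrix (Fin r) (Fin n) ℝ) :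
    sumPrincMinors r (C * E) = (E * C).det := by
  classical
  rw [cauchy_binet_s4, sumPrincMinors]
  refine Finset.sum_congr rfl fun s _ => ?_
  by_cases h : s.card = r
  · rw [dif_pos h, dif_pos h]
    rw [Matrix.submatrix_mul C E _ id _ Function.bijective_id, Matrix.det_mul]
    ring
  · rw [dif_neg h, dif_neg h]

lemma isCompl_of_bij {X Y : Type*} [AddCommGroup X] [Module ℝ X] [AddCommGroup Y] [Module ℝ Y]
    {u : X →ₗ[ℝ] Y} {v : Y →ₗ[ℝ] X} (h : Function.Bijective (v ∘ₗ u)) :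
    IsCompl (LinearMap.range u) (LinearMap.ker v) := by
  constructor
  · rw [Submodule.disjoint_def]
    rintro y ⟨x, rfl⟩ hy
    have hx : x = 0 := by
      apply h.injective
      simpa using hy
    rw [hx, map_zero]
  · rw [codisjoint_iff, eq_top_iff]
    rintro y -
    obtain ⟨x, hx⟩ := h.surjective (v y)
    refine Submodule.mem_sup.mpr ⟨u x, LinearMap.mem_range_self _ _, y - u x, ?_, by abel⟩
    rw [LinearMap.mem_ker, map_sub]
    have hvux : v (u x) = v y := hx
    rw [hvux, sub_self]

lemma bij_comp_of_isCompl_left {r m : ℕ} {u : (Fin r → ℝ) →ₗ[ℝ] (Fin m → ℝ)}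
    {d : (Fin m → ℝ) →ₗ[ℝ] (Fin r → ℝ)} (hd : Function.Surjective d)
    (h : IsCompl (LinearMap.range u) (LinearMap.ker d)) : Function.Bijective (d ∘ₗ u) := by
  have hsurj : Function.Surjective (d ∘ₗ u) := by
    intro z
    obtain ⟨y, rfl⟩ := hd z
    have hy : y ∈ LinearMap.range u ⊔ LinearMap.ker d := by
      rw [h.sup_eq_top]; trivial
    obtain ⟨p, ⟨x, rfl⟩, q, hq, rfl⟩ := Submodule.mem_sup.mp hy
    exact ⟨x, by simp [LinearMap.mem_ker.mp hq]⟩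
  exact ⟨LinearMap.injective_iff_surjective.mpr hsurj, hsurj⟩

lemma bij_comp_of_isCompl_right {r n : ℕ} {c : (Fin r → ℝ) →ₗ[ℝ] (Fin n → ℝ)}
    (hc : Function.Injective c) {v : (Fin n → ℝ) →ₗ[ℝ] (Fin r → ℝ)}
    (h : IsCompl (LinearMap.range c) (LinearMap.ker v)) : Function.Bijective (v ∘ₗ c) := by
  have hinj : Function.Injective (v ∘ₗ c) := by
    rw [injective_iff_map_eq_zero]
    intro x hx
    have hcx : c x ∈ LinearMap.range c ⊓ LinearMap.ker v :=
      ⟨LinearMap.mem_range_self _ _, by simpa using hx⟩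
    rw [h.inf_eq_bot] at hcx
    apply hc
    simpa using (Submodule.mem_bot ℝ).mp hcx
  exact ⟨hinj, LinearMap.injective_iff_surjective.mp hinj⟩

/-- For `A` of rank `r ≥ 1`, the reduced determinant `det_A(AB)` is nonzero iff
`im(BA) ⊕ ker(A) = ℝ^m`, which holds iff `im(A) ⊕ ker(AB) = ℝ^n`. -/
theorem stmt_4 (n m : ℕ) (A : Matrix (Fin n) (Fin m) ℝ) (B : Matrix (Fin m) (Fin n) ℝ)
    (hr : 1 ≤ A.rank) :
    (sumPrincMinors A.rank (A * B) ≠ 0 ↔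
      IsCompl (LinearMap.range (B * A).mulVecLin) (LinearMap.ker A.mulVecLin)) ∧
    (sumPrincMinors A.rank (A * B) ≠ 0 ↔
      IsCompl (LinearMap.range A.mulVecLin) (LinearMap.ker (A * B).mulVecLin)) := by
  classical
  set a := A.mulVecLin with ha
  have hV : Module.finrank ℝ ↥(LinearMap.range a) = A.rank := rfl
  let bV : Basis (Fin A.rank) ℝ ↥(LinearMap.range a) := Module.finBasisOfFinrankEq ℝ _ hV
  set c : (Fin A.rank → ℝ) →ₗ[ℝ] (Fin n → ℝ) :=
    (LinearMap.range a).subtype ∘ₗ (bV.equivFun.symm : _ ≃ₗ[ℝ] _).toLinearMap with hcdef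
  set d : (Fin m → ℝ) →ₗ[ℝ] (Fin A.rank → ℝ) :=
    (bV.equivFun : _ ≃ₗ[ℝ] _).toLinearMap ∘ₗ a.rangeRestrict with hddef
  have hcd : c ∘ₗ d = a := by
    apply LinearMap.ext
    intro x
    simp only [hcdef, hddef, LinearMap.comp_apply, LinearEquiv.coe_coe,
      LinearEquiv.symm_apply_apply]
    rfl
  have hc : Function.Injective c :=
    (Submodule.injective_subtype _).comp bV.equivFun.symm.injective
  have hd : Function.Surjective d :=
    bV.equivFun.surjective.comp a.surjective_rangeRestrict
  have hkerc : LinearMap.ker c = ⊥ := LinearMap.ker_eq_bot.mpr hc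
  set C : Matrix (Fin n) (Fin A.rank) ℝ := LinearMap.toMatrix' c with hCdef
  set D : Matrix (Fin A.rank) (Fin m) ℝ := LinearMap.toMatrix' d with hDdef
  have hCc : C.mulVecLin = c := by
    rw [hCdef, ← Matrix.toLin'_apply', Matrix.toLin'_toMatrix']
  have hDd : D.mulVecLin = d := by
    rw [hDdef, ← Matrix.toLin'_apply', Matrix.toLin'_toMatrix']
  have hA : A = C * D := by
    have h1 : (C * D).mulVecLin = a := by rw [Matrix.mulVecLin_mul, hCc, hDd, hcd]
    have h2 := congrArg LinearMap.toMatrix' h1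
    rw [← Matrix.toLin'_apply', LinearMap.toMatrix'_toLin'] at h2
    rw [ha, ← Matrix.toLin'_apply', LinearMap.toMatrix'_toLin'] at h2
    exact h2.symm
  set M : Matrix (Fin A.rank) (Fin A.rank) ℝ := (D * B) * C with hMdef
  have hAB : A * B = C * (D * B) := by
    rw [← Matrix.mul_assoc, ← hA]
  have hkey : sumPrincMinors A.rank (A * B) = M.det := by
    rw [hAB, sumPrincMinors_eq]
  have hM2 : M.mulVecLin = (d ∘ₗ B.mulVecLin) ∘ₗ c := by
    rw [hMdef, Matrix.mulVecLin_mul, Matrix.mulVecLin_mul, hCc, hDd]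
  have hM1 : M.mulVecLin = d ∘ₗ (B.mulVecLin ∘ₗ c) := by
    rw [hM2, LinearMap.comp_assoc]
  have hdet : M.det ≠ 0 ↔ Function.Bijective M.mulVecLin := by
    constructor
    · intro h
      have hu : IsUnit M := (Matrix.isUnit_iff_isUnit_det M).mpr (isUnit_iff_ne_zero.mpr h)
      constructor
      · rw [Matrix.coe_mulVecLin]
        exact Matrix.mulVec_injective_iff_isUnit.mpr hu
      · rw [Matrix.coe_mulVecLin]
        exact Matrix.mulVec_surjective_iff_isUnit.mpr hu
    · intro h
      apply isUnit_iff_ne_zero.mp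
      apply (Matrix.isUnit_iff_isUnit_det M).mp
      apply Matrix.mulVec_surjective_iff_isUnit.mp
      rw [← Matrix.coe_mulVecLin]
      exact h.surjective
  have hrange1 : LinearMap.range (B * A).mulVecLin = LinearMap.range (B.mulVecLin ∘ₗ c) := by
    rw [Matrix.mulVecLin_mul, ← ha, ← hcd, ← LinearMap.comp_assoc]
    exact LinearMap.range_comp_of_range_eq_top _ (LinearMap.range_eq_top.mpr hd)
  have hker1 : LinearMap.ker a = LinearMap.ker d := by
    rw [← hcd, LinearMap.ker_comp, hkerc, Submodule.comap_bot]
  have hrange2 : LinearMap.range a = LinearMap.range c := by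
    rw [← hcd]
    exact LinearMap.range_comp_of_range_eq_top _ (LinearMap.range_eq_top.mpr hd)
  have hker2 : LinearMap.ker (A * B).mulVecLin = LinearMap.ker (d ∘ₗ B.mulVecLin) := by
    rw [Matrix.mulVecLin_mul, ← ha, ← hcd, LinearMap.comp_assoc, LinearMap.ker_comp, hkerc,
      Submodule.comap_bot]
  constructor
  · rw [hkey, hrange1, hker1, hdet]
    constructor
    · intro h
      rw [hM1] at h
      exact isCompl_of_bij h
    · intro h
      rw [hM1]
      exact bij_comp_of_isCompl_left hd h
  · rw [hkey, hrange2, hker2, hdet]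
    constructor
    · intro h
      rw [hM2] at h
      exact isCompl_of_bij h
    · intro h
      rw [hM2]
      exact bij_comp_of_isCompl_right hc h
end

section
/- Let A ∈ ℝ^{n×m} have rank r ≥ 1 and B ∈ ℝ^{m×n}. Suppose rank(A·B·A) = r. Then for every k ≥ 2, every alternating product of length k of the form A·B₁·A·B₂·⋯ or B₁·A·B₂·A·⋯, where each Bᵢ = B, has rank r. More generally, if 𝓑 is a set of m×n matrices with rank(A·B·A) = r for all B ∈ 𝓑, then every such alternating product with factors Bᵢ ∈ 𝓑 has rank r. -/
/-- Even-length alternating products starting with `A`: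
`PAeven A Bs j = A * Bs 0 * A * Bs 1 * ⋯ * A * Bs (j-1)` (length `2j`). -/
def PAeven {n m : ℕ} (A : Matrix (Fin n) (Fin m) ℝ)
    (Bs : ℕ → Matrix (Fin m) (Fin n) ℝ) : ℕ → Matrix (Fin n) (Fin n) ℝ
  | 0 => 1
  | j + 1 => PAeven A Bs j * A * Bs j

/-- Even-length alternating products starting with a `B`:
`PBeven A Bs j = Bs 0 * A * Bs 1 * A * ⋯ * Bs (j-1) * A` (length `2j`). -/
def PBeven {n m : ℕ} (A : Matrix (Fin n) (Fin m) ℝ)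
    (Bs : ℕ → Matrix (Fin m) (Fin n) ℝ) : ℕ → Matrix (Fin m) (Fin m) ℝ
  | 0 => 1
  | j + 1 => PBeven A Bs j * Bs j * A

open Module LinearMap

lemma aux_map {V W : Type*} [AddCommGroup V] [Module ℝ V] [FiniteDimensional ℝ V]
    [AddCommGroup W] [Module ℝ W] (f : V →ₗ[ℝ] W) (S T : Submodule ℝ V) (hTS : T ≤ S)
    (hf : finrank ℝ (S.map f) = finrank ℝ S) :
    finrank ℝ (T.map f) = finrank ℝ T := by
  have h1 : ∀ U : Submodule ℝ V,
      finrank ℝ (U.map f) + finrank ℝ ((ker f ⊓ U : Submodule ℝ V)) = finrank ℝ U := by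
    intro U
    have := LinearMap.finrank_range_add_finrank_ker (f.domRestrict U)
    rwa [LinearMap.range_domRestrict, LinearMap.ker_domRestrict,
      show Submodule.comap U.subtype (ker f) = Submodule.comap U.subtype (ker f ⊓ U) by
        rw [Submodule.comap_inf, Submodule.comap_subtype_self, inf_top_eq],
      (Submodule.comapSubtypeEquivOfLe (inf_le_right : ker f ⊓ U ≤ U)).finrank_eq] at this
  have hS := h1 S
  rw [hf] at hS
  have hSk : finrank ℝ ((ker f ⊓ S : Submodule ℝ V)) = 0 := by omega
  have hbot : (ker f ⊓ S : Submodule ℝ V) = ⊥ := Submodule.finrank_eq_zero.mp hSk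
  have hTbot : (ker f ⊓ T : Submodule ℝ V) = ⊥ :=
    le_bot_iff.mp (hbot ▸ inf_le_inf_left _ hTS)
  have := h1 T
  rwa [hTbot, finrank_bot, Nat.add_zero] at this

/-- If `rank (Y*A) = rank A` and `range Z ≤ range A`, then `rank (Y*Z) = rank Z`. -/
lemma aux_rank {n m p : ℕ} (Y : Matrix (Fin n) (Fin n) ℝ) (A : Matrix (Fin n) (Fin m) ℝ)
    (Z : Matrix (Fin n) (Fin p) ℝ)
    (hZ : LinearMap.range Z.mulVecLin ≤ LinearMap.range A.mulVecLin)
    (hY : (Y * A).rank = A.rank) :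
    (Y * Z).rank = Z.rank := by
  have e1 : (Y * A).rank = finrank ℝ ((LinearMap.range A.mulVecLin).map Y.mulVecLin) := by
    rw [Matrix.rank, Matrix.mulVecLin_mul, LinearMap.range_comp]
  have e2 : (Y * Z).rank = finrank ℝ ((LinearMap.range Z.mulVecLin).map Y.mulVecLin) := by
    rw [Matrix.rank, Matrix.mulVecLin_mul, LinearMap.range_comp]
  rw [e2]
  exact aux_map Y.mulVecLin _ _ hZ (by rw [← e1, hY]; rfl)

/-- If `rank (A·B·A) = rank A = r` for all `B` in a set `𝓑`, then every alternating
product of length `k ≥ 2` of the form `A·B₁·A·B₂·⋯` or `B₁·A·B₂·A·⋯` with all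
`Bᵢ ∈ 𝓑` has rank `r`. -/
theorem stmt_6 (n m : ℕ) (A : Matrix (Fin n) (Fin m) ℝ) (hA : 1 ≤ A.rank)
    (𝓑 : Set (Matrix (Fin m) (Fin n) ℝ))
    (h : ∀ B ∈ 𝓑, (A * B * A).rank = A.rank) :
    ∀ Bs : ℕ → Matrix (Fin m) (Fin n) ℝ, (∀ i, Bs i ∈ 𝓑) →
      ∀ j, 1 ≤ j →
        (PAeven A Bs j).rank = A.rank ∧
        (PAeven A Bs j * A).rank = A.rank ∧
        (PBeven A Bs j).rank = A.rank ∧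
        (PBeven A Bs j * Bs j).rank = A.rank := by
  intro Bs hBs
  -- key step
  have key : ∀ (Y : Matrix (Fin n) (Fin n) ℝ) (B : Matrix (Fin m) (Fin n) ℝ), B ∈ 𝓑 →
      (Y * A).rank = A.rank → (Y * A * B).rank = A.rank ∧ (Y * A * B * A).rank = A.rank := by
    intro Y B hB hY
    have hsub : LinearMap.range (A * B * A).mulVecLin ≤ LinearMap.range A.mulVecLin := by
      rw [show A * B * A = A * (B * A) by rw [Matrix.mul_assoc], Matrix.mulVecLin_mul, LinearMap.range_comp]
      exact LinearMap.map_le_range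
    have h2 : (Y * (A * B * A)).rank = (A * B * A).rank := aux_rank Y A _ hsub hY
    have h3 : (Y * A * B * A).rank = A.rank := by
      rw [show Y * A * B * A = Y * (A * B * A) by rw [Matrix.mul_assoc, Matrix.mul_assoc, Matrix.mul_assoc], h2, h B hB]
    refine ⟨le_antisymm ?_ ?_, h3⟩
    · calc (Y * A * B).rank ≤ (Y * A).rank := Matrix.rank_mul_le_left _ _
        _ = A.rank := hY
    · calc A.rank = (Y * A * B * A).rank := h3.symm
        _ ≤ (Y * A * B).rank := Matrix.rank_mul_le_left _ _
  -- invariant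
  have inv : ∀ j, (PAeven A Bs j * A).rank = A.rank := by
    intro j
    induction j with
    | zero => rw [PAeven, Matrix.one_mul]
    | succ j ih =>
      show (PAeven A Bs j * A * Bs j * A).rank = A.rank
      exact (key _ _ (hBs j) ih).2
  -- commutation
  have comm : ∀ j, A * PBeven A Bs j = PAeven A Bs j * A := by
    intro j
    induction j with
    | zero => rw [PAeven, PBeven, Matrix.one_mul, Matrix.mul_one]
    | succ j ih =>
      show A * (PBeven A Bs j * Bs j * A) = PAeven A Bs j * A * Bs j * A
      rw [← Matrix.mul_assoc, ← Matrix.mul_assoc, ih]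
  rintro (_ | j) hj
  · omega
  have h1 : (PAeven A Bs (j + 1)).rank = A.rank := (key _ _ (hBs j) (inv j)).1
  have hPB : (PBeven A Bs (j + 1)).rank = A.rank := by
    refine le_antisymm ?_ ?_
    · calc (PBeven A Bs (j+1)).rank = (PBeven A Bs j * Bs j * A).rank := rfl
        _ ≤ A.rank := Matrix.rank_mul_le_right _ _
    · calc A.rank = (PAeven A Bs (j+1) * A).rank := (inv (j+1)).symm
        _ = (A * PBeven A Bs (j+1)).rank := by rw [comm]
        _ ≤ (PBeven A Bs (j+1)).rank := Matrix.rank_mul_le_right _ _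
  refine ⟨h1, inv (j+1), hPB, le_antisymm ?_ ?_⟩
  · calc (PBeven A Bs (j+1) * Bs (j+1)).rank ≤ (PBeven A Bs (j+1)).rank :=
        Matrix.rank_mul_le_left _ _
      _ = A.rank := hPB
  · have : (PAeven A Bs (j+1) * A * Bs (j+1)).rank = A.rank :=
      (key _ _ (hBs (j+1)) (inv (j+1))).1
    calc A.rank = (PAeven A Bs (j+1) * A * Bs (j+1)).rank := this.symm
      _ = (A * PBeven A Bs (j+1) * Bs (j+1)).rank := by rw [comm]
      _ = (A * (PBeven A Bs (j+1) * Bs (j+1))).rank := by rw [Matrix.mul_assoc]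
      _ ≤ (PBeven A Bs (j+1) * Bs (j+1)).rank := Matrix.rank_mul_le_right _ _
end

section
/- Let A, B ∈ ℝ^{n×m} and define Ã = [A | −I] ∈ ℝ^{n×(m+n)} and B̃ = [B | −I] ∈ ℝ^{n×(m+n)}, where I is the n×n identity. Then the following are equivalent: (i) for every k and all equal-size index sets α, β, A[α|β]·B[α|β] ≥ 0; (ii) for all index sets β ⊆ {1,...,m+n} of size n, Ã[{1,...,n}|β]·B̃[{1,...,n}|β] ≥ 0; (iii) the products in (ii) are nonnegative and at least one is positive; (iv) det(Ã·D·B̃ᵀ) ≥ 0 for every positive diagonal (m+n)×(m+n) matrix D; (v) det(Ã·D·B̃ᵀ) > 0 for every positive diagonal (m+n)×(m+n) matrix D. -/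
/-- The augmented matrix `[A | −I] ∈ ℝ^{n×(m+n)}`. -/
def augNegI {n m : ℕ} (A : Matrix (Fin n) (Fin m) ℝ) : Matrix (Fin n) (Fin (m + n)) ℝ :=
  Matrix.of fun i j =>
    Fin.addCases (motive := fun _ => ℝ) (fun j' => A i j')
      (fun j' => if i = j' then (-1 : ℝ) else 0) j

open Matrix Finset Equiv

instance {n p : ℕ} : DecidablePred (StrictMono : (Fin n → Fin p) → Prop) :=
  fun _ => decidable_of_iff (∀ a b, a < b → _ < _) Iff.rfl

lemma det_sum_perm {n : ℕ} (X : Matrix (Fin n) (Fin n) ℝ) :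
    ∑ σ : Perm (Fin n), ((Perm.sign σ : ℤ) : ℝ) * ∏ i, X i (σ i) = X.det := by
  rw [← Matrix.det_transpose X, Matrix.det_apply']
  simp [Matrix.transpose_apply]

lemma cauchyBinet_s7 {n p : ℕ} (M N : Matrix (Fin n) (Fin p) ℝ) (d : Fin p → ℝ) :
    (M * Matrix.diagonal d * Nᵀ).det =
      ∑ β : {β : Fin n → Fin p // StrictMono β},
        (∏ i, d (β.1 i)) * ((M.submatrix id β.1).det * (N.submatrix id β.1).det) := by
  classical
  set F : (Fin n → Fin p) → ℝ :=
    fun f => (∏ i, M i (f i) * d (f i)) * (Nᵀ.submatrix f id).det with hF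
  have h0 : (M * Matrix.diagonal d * Nᵀ).det = ∑ f : Fin n → Fin p, F f := by
    have hrow : (M * Matrix.diagonal d * Nᵀ) =
        fun i => ∑ j, (M i j * d j) • (fun k' => N k' j) := by
      funext i k
      simp [Matrix.mul_apply, Matrix.diagonal_apply, Finset.sum_apply,
        Matrix.transpose_apply, mul_assoc, Finset.mul_sum, Finset.sum_mul, mul_comm, mul_left_comm]
    show Matrix.detRowAlternating (M * Matrix.diagonal d * Nᵀ) = _
    rw [hrow, ← AlternatingMap.coe_multilinearMap,
      MultilinearMap.map_sum (Matrix.detRowAlternating (R := ℝ) (n := Fin n)).toMultilinearMap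
        (g := fun _ j => (M _ j * d j) • (fun k' => N k' j))]
    refine Finset.sum_congr rfl fun f _ => ?_
    rw [MultilinearMap.map_smul_univ]
    rfl
  have h1 : ∑ f : Fin n → Fin p, F f
      = ∑ f ∈ univ.filter (fun f => Function.Injective f), F f := by
    symm
    apply Finset.sum_subset (filter_subset _ _)
    intro f _ hf
    simp only [mem_filter, mem_univ, true_and] at hf
    obtain ⟨a, b, hab, hne⟩ := Function.not_injective_iff.mp hf
    have hz : (Nᵀ.submatrix f id).det = 0 :=
      Matrix.det_zero_of_row_eq hne (by funext k; simp [Matrix.submatrix_apply, hab])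
    simp [hF, hz]
  have h2 : ∑ f ∈ univ.filter (fun f => Function.Injective f), F f
      = ∑ q : {β : Fin n → Fin p // StrictMono β} × Perm (Fin n), F (q.1.1 ∘ ⇑q.2) := by
    symm
    apply Finset.sum_bij (i := fun (q : {β : Fin n → Fin p // StrictMono β} × Perm (Fin n)) (_ : q ∈ univ) => q.1.1 ∘ ⇑q.2)
    · intro q _
      simp only [mem_filter, mem_univ, true_and]
      exact q.1.2.injective.comp q.2.injective
    · intro q1 _ q2 _ h
      obtain ⟨⟨β, hβ⟩, σ⟩ := q1
      obtain ⟨⟨β', hβ'⟩, σ'⟩ := q2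
      dsimp only at h
      have himg : Finset.image β univ = Finset.image β' univ := by
        have h' : Finset.image (β ∘ ⇑σ) univ = Finset.image (β' ∘ ⇑σ') univ := by rw [h]
        rwa [← Finset.image_image, ← Finset.image_image, Finset.image_univ_equiv,
          Finset.image_univ_equiv] at h'
      have hcard : (Finset.image β univ).card = n := by
        rw [Finset.card_image_of_injective _ hβ.injective, card_univ, Fintype.card_fin]
      have e1 : β = ⇑((Finset.image β univ).orderEmbOfFin hcard) :=
        Finset.orderEmbOfFin_unique hcard (fun i => Finset.mem_image_of_mem β (mem_univ i)) hβ
      have e2 : β' = ⇑((Finset.image β univ).orderEmbOfFin hcard) :=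
        Finset.orderEmbOfFin_unique hcard
          (fun i => himg ▸ Finset.mem_image_of_mem β' (mem_univ i)) hβ'
      have hβeq : β = β' := e1.trans e2.symm
      subst hβeq
      have hσeq : σ = σ' := Equiv.ext fun i => hβ.injective (congrFun h i)
      rw [hσeq]
    · intro f hf
      simp only [mem_filter, mem_univ, true_and] at hf
      have hcard : (Finset.image f univ).card = n := by
        rw [Finset.card_image_of_injective _ hf, card_univ, Fintype.card_fin]
      set s := Finset.image f univ with hs
      have hmem : ∀ i, f i ∈ s := fun i => Finset.mem_image_of_mem f (mem_univ i)
      set σ0 : Fin n → Fin n := fun i => (s.orderIsoOfFin hcard).symm ⟨f i, hmem i⟩ with hσ0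
      have hσinj : Function.Injective σ0 := by
        intro a b hab
        apply hf
        have h2 : ((s.orderIsoOfFin hcard) (σ0 a) : Fin p)
            = ((s.orderIsoOfFin hcard) (σ0 b) : Fin p) := by rw [hab]
        simpa [hσ0, OrderIso.apply_symm_apply] using h2
      have key : ∀ i, s.orderEmbOfFin hcard (σ0 i) = f i := by
        intro i
        rw [← Finset.coe_orderIsoOfFin_apply]
        simp [hσ0]
      refine ⟨⟨⟨s.orderEmbOfFin hcard, (s.orderEmbOfFin hcard).strictMono⟩,
        Equiv.ofBijective σ0 (Finite.injective_iff_bijective.mp hσinj)⟩, mem_univ _, ?_⟩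
      funext i
      exact key i
    · intro q _
      rfl
  rw [h0, h1, h2, Fintype.sum_prod_type]
  refine Finset.sum_congr rfl fun β _ => ?_
  have hXd : ∀ σ : Perm (Fin n), F (β.1 ∘ ⇑σ) =
      (((Perm.sign σ : ℤ) : ℝ) * ∏ i, (M.submatrix id β.1) i (σ i)) *
        ((∏ i, d (β.1 i)) * (N.submatrix id β.1).det) := by
    intro σ
    have hsplit : (∏ i, M i ((β.1 ∘ ⇑σ) i) * d ((β.1 ∘ ⇑σ) i))
        = (∏ i, (M.submatrix id β.1) i (σ i)) * ∏ i, d (β.1 i) := by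
      rw [Finset.prod_mul_distrib]
      congr 1
      exact Equiv.prod_comp σ (fun i => d (β.1 i))
    have hNdet : (Nᵀ.submatrix (β.1 ∘ ⇑σ) id).det
        = ((Perm.sign σ : ℤ) : ℝ) * (N.submatrix id β.1).det := by
      have he : Nᵀ.submatrix (β.1 ∘ ⇑σ) id = (Nᵀ.submatrix β.1 id).submatrix ⇑σ id := by
        simp [Matrix.submatrix_submatrix]
      rw [he, Matrix.det_permute, ← Matrix.det_transpose (N.submatrix id β.1),
        Matrix.transpose_submatrix]
    rw [hF]
    beta_reduce
    rw [hsplit, hNdet]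
    ring
  rw [Finset.sum_congr rfl (fun σ _ => hXd σ), ← Finset.sum_mul, det_sum_perm]
  ring

lemma detAug {n m k r : ℕ} (eR eC : (Fin k ⊕ Fin r) ≃ Fin n)
    (β₁ : Fin k → Fin m) (γ : Fin r → Fin n) (α : Fin k → Fin n)
    (hγinj : Function.Injective γ)
    (hαR : ∀ i, eR (Sum.inl i) = α i) (hγR : ∀ j, eR (Sum.inr j) = γ j)
    (hdisj : ∀ i j, α i ≠ γ j)
    (βt : Fin n → Fin (m + n))
    (hβl : ∀ i, βt (eC (Sum.inl i)) = Fin.castAdd n (β₁ i))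
    (hβr : ∀ j, βt (eC (Sum.inr j)) = Fin.natAdd m (γ j))
    (A : Matrix (Fin n) (Fin m) ℝ) :
    ((augNegI A).submatrix id βt).det
      = ((Perm.sign (eC.trans eR.symm) : ℤ) : ℝ) * (-1) ^ r * (A.submatrix α β₁).det := by
  classical
  set Y := (augNegI A).submatrix id βt with hY
  have hblock : Y.submatrix ⇑eR ⇑eC
      = Matrix.fromBlocks (A.submatrix α β₁) 0 (A.submatrix γ β₁) (-1) := by
    ext a b
    cases a with
    | inl i =>
      cases b with
      | inl i' =>
        simp only [hY, Matrix.submatrix_apply, id_eq, hαR, hβl, Matrix.fromBlocks_apply₁₁]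
        simp [augNegI]
      | inr j' =>
        simp only [hY, Matrix.submatrix_apply, id_eq, hαR, hβr, Matrix.fromBlocks_apply₁₂]
        simp only [augNegI, Matrix.of_apply, Fin.addCases_right]
        simp [if_neg (hdisj i j')]
    | inr j =>
      cases b with
      | inl i' =>
        simp only [hY, Matrix.submatrix_apply, id_eq, hγR, hβl, Matrix.fromBlocks_apply₂₁]
        simp [augNegI]
      | inr j' =>
        simp only [hY, Matrix.submatrix_apply, id_eq, hγR, hβr, Matrix.fromBlocks_apply₂₂]
        simp only [augNegI, Matrix.of_apply, Fin.addCases_right]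
        by_cases hjj : j = j'
        · simp [hjj]
        · simp [hjj, if_neg (fun hc => hjj (hγinj hc)), Matrix.one_apply]
  have hdetblock : (Y.submatrix ⇑eR ⇑eC).det = (A.submatrix α β₁).det * (-1) ^ r := by
    rw [hblock, Matrix.det_fromBlocks_zero₁₂]
    congr 1
    rw [show (-1 : Matrix (Fin r) (Fin r) ℝ) = -(1 : Matrix (Fin r) (Fin r) ℝ) from rfl,
      Matrix.det_neg]
    simp
  have hperm : Y.submatrix ⇑eR ⇑eC
      = (Y.submatrix ⇑eR ⇑eR).submatrix id ⇑(eC.trans eR.symm) := by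
    ext a b
    simp [Matrix.submatrix_apply]
  have eq1 : ((Perm.sign (eC.trans eR.symm) : ℤ) : ℝ) * Y.det
      = (A.submatrix α β₁).det * (-1) ^ r := by
    rw [← hdetblock, hperm, Matrix.det_permute', Matrix.det_submatrix_equiv_self]
  set ε := ((Perm.sign (eC.trans eR.symm) : ℤ) : ℝ) with hε
  have hεε : ε * ε = 1 := by
    rw [hε, ← Int.cast_mul, ← Units.val_mul, Int.units_mul_self]
    norm_num
  calc Y.det = (ε * ε) * Y.det := by rw [hεε, one_mul]
    _ = ε * (ε * Y.det) := by ring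
    _ = ε * ((A.submatrix α β₁).det * (-1) ^ r) := by rw [eq1]
    _ = ε * (-1) ^ r * (A.submatrix α β₁).det := by ring

lemma detAug_mul {n m k r : ℕ} (eR eC : (Fin k ⊕ Fin r) ≃ Fin n)
    (β₁ : Fin k → Fin m) (γ : Fin r → Fin n) (α : Fin k → Fin n)
    (hγinj : Function.Injective γ)
    (hαR : ∀ i, eR (Sum.inl i) = α i) (hγR : ∀ j, eR (Sum.inr j) = γ j)
    (hdisj : ∀ i j, α i ≠ γ j)
    (βt : Fin n → Fin (m + n))
    (hβl : ∀ i, βt (eC (Sum.inl i)) = Fin.castAdd n (β₁ i))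
    (hβr : ∀ j, βt (eC (Sum.inr j)) = Fin.natAdd m (γ j))
    (A B : Matrix (Fin n) (Fin m) ℝ) :
    ((augNegI A).submatrix id βt).det * ((augNegI B).submatrix id βt).det
      = (A.submatrix α β₁).det * (B.submatrix α β₁).det := by
  rw [detAug eR eC β₁ γ α hγinj hαR hγR hdisj βt hβl hβr A,
    detAug eR eC β₁ γ α hγinj hαR hγR hdisj βt hβl hβr B]
  set ε := ((Perm.sign (eC.trans eR.symm) : ℤ) : ℝ) with hε
  have hεε : ε * ε = 1 := by
    rw [hε, ← Int.cast_mul, ← Units.val_mul, Int.units_mul_self]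
    norm_num
  have h2 : ((-1 : ℝ) ^ r) * (-1 : ℝ) ^ r = 1 := by
    rw [← pow_add]
    exact Even.neg_one_pow ⟨r, rfl⟩
  calc (ε * (-1) ^ r * (A.submatrix α β₁).det) * (ε * (-1) ^ r * (B.submatrix α β₁).det)
      = (ε * ε) * (((-1 : ℝ) ^ r * (-1 : ℝ) ^ r) *
          ((A.submatrix α β₁).det * (B.submatrix α β₁).det)) := by ring
    _ = (A.submatrix α β₁).det * (B.submatrix α β₁).det := by rw [hεε, h2]; ring

/-- Decomposition of an arbitrary strictly monotone column choice for the augmented matrix. -/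
lemma decompose {n m : ℕ} (βt : Fin n → Fin (m + n)) (hβt : StrictMono βt) :
    ∃ (k : ℕ) (α : Fin k → Fin n) (β : Fin k → Fin m), StrictMono α ∧ StrictMono β ∧
      ∀ A B : Matrix (Fin n) (Fin m) ℝ,
        ((augNegI A).submatrix id βt).det * ((augNegI B).submatrix id βt).det
          = (A.submatrix α β).det * (B.submatrix α β).det := by
  classical
  set T : Finset (Fin n) := univ.filter (fun i => (βt i : ℕ) < m) with hT
  set k := T.card with hk
  set r := Tᶜ.card with hr
  have hkr : k + r = n := by
    rw [hk, hr, Finset.card_add_card_compl, Fintype.card_fin]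
  let e1 := T.orderEmbOfFin (rfl : T.card = k)
  let e2 := Tᶜ.orderEmbOfFin (rfl : Tᶜ.card = r)
  have he1lt : ∀ i, (βt (e1 i) : ℕ) < m := by
    intro i
    have h1 : e1 i ∈ T := Finset.orderEmbOfFin_mem T rfl i
    exact (Finset.mem_filter.mp h1).2
  have he2ge : ∀ j, m ≤ (βt (e2 j) : ℕ) := by
    intro j
    have h1 : e2 j ∉ T := Finset.mem_compl.mp (Finset.orderEmbOfFin_mem Tᶜ rfl j)
    exact le_of_not_gt (fun h => h1 (Finset.mem_filter.mpr ⟨mem_univ _, h⟩))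
  set β : Fin k → Fin m := fun i => ⟨(βt (e1 i) : ℕ), he1lt i⟩ with hβ
  have hγlt : ∀ j, (βt (e2 j) : ℕ) - m < n := by
    intro j
    have := (βt (e2 j)).isLt
    have := he2ge j
    omega
  set γ : Fin r → Fin n := fun j => ⟨(βt (e2 j) : ℕ) - m, hγlt j⟩ with hγ
  have hγinj : Function.Injective γ := by
    intro a b hab
    apply e2.injective
    apply hβt.injective
    have hva := he2ge a
    have hvb := he2ge b
    have hv : (βt (e2 a) : ℕ) - m = (βt (e2 b) : ℕ) - m := congrArg Fin.val hab
    exact Fin.ext (by omega)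
  -- eC
  have heCinj : Function.Injective (Sum.elim ⇑e1 ⇑e2) := by
    rintro (a | a) (b | b) hab <;> simp only [Sum.elim_inl, Sum.elim_inr] at hab
    · exact congrArg Sum.inl (e1.injective hab)
    · exfalso
      have ha : e1 a ∈ T := Finset.orderEmbOfFin_mem T rfl a
      have hb : e2 b ∉ T := Finset.mem_compl.mp (Finset.orderEmbOfFin_mem Tᶜ rfl b)
      exact hb (hab ▸ ha)
    · exfalso
      have ha : e2 a ∉ T := Finset.mem_compl.mp (Finset.orderEmbOfFin_mem Tᶜ rfl a)
      have hb : e1 b ∈ T := Finset.orderEmbOfFin_mem T rfl b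
      exact ha (hab ▸ hb)
    · exact congrArg Sum.inr (e2.injective hab)
  have heCbij : Function.Bijective (Sum.elim ⇑e1 ⇑e2) :=
    (Fintype.bijective_iff_injective_and_card _).2
      ⟨heCinj, by simp [Fintype.card_sum, hkr]⟩
  set eC : (Fin k ⊕ Fin r) ≃ Fin n := Equiv.ofBijective _ heCbij with heC
  -- α and eR
  set Rγ : Finset (Fin n) := univ.image γ with hRγ
  have hRγcard : Rγᶜ.card = k := by
    rw [hRγ, Finset.card_compl, Finset.card_image_of_injective _ hγinj, card_univ,
      Fintype.card_fin, Fintype.card_fin]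
    omega
  set α : Fin k → Fin n := ⇑(Rγᶜ.orderEmbOfFin hRγcard) with hα
  have hdisj : ∀ i j, α i ≠ γ j := by
    intro i j hc
    have hi : α i ∉ Rγ := Finset.mem_compl.mp (Finset.orderEmbOfFin_mem Rγᶜ hRγcard i)
    have hm : γ j ∈ Rγ := Finset.mem_image_of_mem γ (mem_univ j)
    rw [← hc] at hm
    exact hi hm
  have heRinj : Function.Injective (Sum.elim α γ) := by
    rintro (a | a) (b | b) hab <;> simp only [Sum.elim_inl, Sum.elim_inr] at hab
    · exact congrArg Sum.inl ((Rγᶜ.orderEmbOfFin hRγcard).injective hab)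
    · exact absurd hab (hdisj a b)
    · exact absurd hab.symm (hdisj b a)
    · exact congrArg Sum.inr (hγinj hab)
  have heRbij : Function.Bijective (Sum.elim α γ) :=
    (Fintype.bijective_iff_injective_and_card _).2
      ⟨heRinj, by simp [Fintype.card_sum, hkr]⟩
  set eR : (Fin k ⊕ Fin r) ≃ Fin n := Equiv.ofBijective _ heRbij with heR
  refine ⟨k, α, β, (Rγᶜ.orderEmbOfFin hRγcard).strictMono, ?_, ?_⟩
  · intro a b hab
    exact hβt (e1.strictMono hab)
  intro A B
  apply detAug_mul eR eC β γ α hγinj (fun i => rfl) (fun j => rfl) hdisj βt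
  · intro i
    show βt (e1 i) = Fin.castAdd n (β i)
    exact Fin.ext rfl
  · intro j
    show βt (e2 j) = Fin.natAdd m (γ j)
    have := he2ge j
    exact Fin.ext (by simp [hγ, Fin.natAdd]; omega)

lemma compose {n m k : ℕ} (α : Fin k → Fin n) (β : Fin k → Fin m)
    (hα : StrictMono α) (hβ : StrictMono β) :
    ∃ βt : Fin n → Fin (m + n), StrictMono βt ∧
      ∀ A B : Matrix (Fin n) (Fin m) ℝ,
        ((augNegI A).submatrix id βt).det * ((augNegI B).submatrix id βt).det
          = (A.submatrix α β).det * (B.submatrix α β).det := by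
  classical
  have hkn : k ≤ n := by
    have := Fintype.card_le_of_injective α hα.injective
    simpa using this
  set r := n - k with hrdef
  have hkr : k + r = n := by omega
  set Rα : Finset (Fin n) := univ.image α with hRα
  have hRαc : Rαᶜ.card = r := by
    rw [hRα, Finset.card_compl, Finset.card_image_of_injective _ hα.injective, card_univ,
      Fintype.card_fin, Fintype.card_fin]
  set γ : Fin r → Fin n := ⇑(Rαᶜ.orderEmbOfFin hRαc) with hγ
  have hγinj : Function.Injective γ := (Rαᶜ.orderEmbOfFin hRαc).injective
  have hdisj : ∀ i j, α i ≠ γ j := by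
    intro i j hc
    have hj : γ j ∉ Rα := Finset.mem_compl.mp (Finset.orderEmbOfFin_mem Rαᶜ hRαc j)
    have hm : α i ∈ Rα := Finset.mem_image_of_mem α (mem_univ i)
    rw [hc] at hm
    exact hj hm
  have heRinj : Function.Injective (Sum.elim α γ) := by
    rintro (a | a) (b | b) hab <;> simp only [Sum.elim_inl, Sum.elim_inr] at hab
    · exact congrArg Sum.inl (hα.injective hab)
    · exact absurd hab (hdisj a b)
    · exact absurd hab.symm (hdisj b a)
    · exact congrArg Sum.inr (hγinj hab)
  have heRbij : Function.Bijective (Sum.elim α γ) :=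
    (Fintype.bijective_iff_injective_and_card _).2
      ⟨heRinj, by simp [Fintype.card_sum, hkr]⟩
  set eR : (Fin k ⊕ Fin r) ≃ Fin n := Equiv.ofBijective _ heRbij with heR
  -- the column function
  set c0 : (Fin k ⊕ Fin r) → Fin (m + n) :=
    Sum.elim (fun i => Fin.castAdd n (β i)) (fun j => Fin.natAdd m (γ j)) with hc0
  have hc0inj : Function.Injective c0 := by
    rintro (a | a) (b | b) hab <;>
      simp only [hc0, Sum.elim_inl, Sum.elim_inr] at hab
    · exact congrArg Sum.inl (hβ.injective (by
        have := congrArg Fin.val hab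
        exact Fin.ext this))
    · exfalso
      have h1 := congrArg Fin.val hab
      simp only [Fin.coe_castAdd, Fin.coe_natAdd] at h1
      have := (β a).isLt
      omega
    · exfalso
      have h1 := congrArg Fin.val hab
      simp only [Fin.coe_castAdd, Fin.coe_natAdd] at h1
      have := (β b).isLt
      omega
    · exact congrArg Sum.inr (hγinj (by
        have h1 := congrArg Fin.val hab
        simp only [Fin.coe_natAdd] at h1
        exact Fin.ext (by omega)))
  set U : Finset (Fin (m + n)) := univ.image c0 with hU
  have hUcard : U.card = n := by
    rw [hU, Finset.card_image_of_injective _ hc0inj, card_univ, Fintype.card_sum,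
      Fintype.card_fin, Fintype.card_fin, hkr]
  set βt : Fin n → Fin (m + n) := ⇑(U.orderEmbOfFin hUcard) with hβt
  have hmem : ∀ x, c0 x ∈ U := fun x => Finset.mem_image_of_mem c0 (mem_univ x)
  set cfun : (Fin k ⊕ Fin r) → Fin n :=
    fun x => (U.orderIsoOfFin hUcard).symm ⟨c0 x, hmem x⟩ with hcfun
  have hcinj : Function.Injective cfun := by
    intro a b hab
    apply hc0inj
    have h2 := congrArg (fun y => ((U.orderIsoOfFin hUcard) y : Fin (m + n))) hab
    simpa [hcfun, OrderIso.apply_symm_apply] using h2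
  have hcbij : Function.Bijective cfun :=
    (Fintype.bijective_iff_injective_and_card _).2
      ⟨hcinj, by simp [Fintype.card_sum, hkr]⟩
  set eC : (Fin k ⊕ Fin r) ≃ Fin n := Equiv.ofBijective _ hcbij with heC
  have hval : ∀ x, βt (cfun x) = c0 x := by
    intro x
    rw [hβt, hcfun]
    rw [← Finset.coe_orderIsoOfFin_apply, OrderIso.apply_symm_apply]
  refine ⟨βt, (U.orderEmbOfFin hUcard).strictMono, ?_⟩
  intro A B
  exact detAug_mul eR eC β γ α hγinj (fun i => rfl) (fun j => rfl) hdisj βt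
    (fun i => hval (Sum.inl i)) (fun j => hval (Sum.inr j)) A B

lemma aug_natAdd_strictMono {n m : ℕ} : StrictMono (Fin.natAdd m : Fin n → Fin (m + n)) := by
  intro a b h
  simp only [Fin.lt_def, Fin.coe_natAdd]
  omega

lemma aug_natAdd_eq {n m : ℕ} (A : Matrix (Fin n) (Fin m) ℝ) :
    (augNegI A).submatrix id (Fin.natAdd m) = -1 := by
  ext i j
  simp only [Matrix.submatrix_apply, id_eq, augNegI, Matrix.of_apply, Fin.addCases_right,
    Matrix.neg_apply, Matrix.one_apply]
  by_cases h : i = j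
  · simp [h]
  · simp [h]

/-- Equivalent formulations of compatibility of two matrices (Lemma on `Ã = [A|−I]`,
`B̃ = [B|−I]`). -/
theorem stmt_7 (n m : ℕ) (A B : Matrix (Fin n) (Fin m) ℝ) :
    [ -- (i) compatibility of A and B
      (∀ (k : ℕ) (α : Fin k → Fin n) (β : Fin k → Fin m), StrictMono α → StrictMono β →
        0 ≤ (A.submatrix α β).det * (B.submatrix α β).det),
      -- (ii) all products of maximal minors of Ã, B̃ are nonnegative
      (∀ β : Fin n → Fin (m + n), StrictMono β →
        0 ≤ ((augNegI A).submatrix id β).det * ((augNegI B).submatrix id β).det),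
      -- (iii) as (ii), and at least one product is positive
      ((∀ β : Fin n → Fin (m + n), StrictMono β →
          0 ≤ ((augNegI A).submatrix id β).det * ((augNegI B).submatrix id β).det) ∧
        ∃ β : Fin n → Fin (m + n), StrictMono β ∧
          0 < ((augNegI A).submatrix id β).det * ((augNegI B).submatrix id β).det),
      -- (iv) det(Ã D B̃ᵀ) ≥ 0 for all positive diagonal D
      (∀ d : Fin (m + n) → ℝ, (∀ i, 0 < d i) →
        0 ≤ (augNegI A * Matrix.diagonal d * (augNegI B).transpose).det),
      -- (v) det(Ã D B̃ᵀ) > 0 for all positive diagonal D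
      (∀ d : Fin (m + n) → ℝ, (∀ i, 0 < d i) →
        0 < (augNegI A * Matrix.diagonal d * (augNegI B).transpose).det) ].TFAE := by
    classical
  tfae_have 1 → 2
  · intro h1 βt hβt
    obtain ⟨k, α, β, hα, hβ, heq⟩ := decompose βt hβt
    rw [heq A B]
    exact h1 k α β hα hβ
  tfae_have 2 → 1
  · intro h2 k α β hα hβ
    obtain ⟨βt, hβt, heq⟩ := compose α β hα hβ
    rw [← heq A B]
    exact h2 βt hβt
  tfae_have 2 → 3
  · intro h2
    refine ⟨h2, Fin.natAdd m, aug_natAdd_strictMono, ?_⟩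
    rw [aug_natAdd_eq A, aug_natAdd_eq B]
    rw [show (-1 : Matrix (Fin n) (Fin n) ℝ) = -(1 : Matrix (Fin n) (Fin n) ℝ) from rfl,
      Matrix.det_neg]
    simp only [Matrix.det_one, mul_one, Fintype.card_fin]
    rw [← pow_add]
    have hone : ((-1 : ℝ)) ^ (n + n) = 1 := Even.neg_one_pow ⟨n, rfl⟩
    rw [hone]
    exact one_pos
  tfae_have 3 → 5
  · rintro ⟨h2, β₀, hβ₀, hpos⟩ d hd
    rw [cauchyBinet_s7]
    apply Finset.sum_pos'
    · intro β _
      exact mul_nonneg (Finset.prod_nonneg fun i _ => (hd _).le) (h2 β.1 β.2)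
    · exact ⟨⟨β₀, hβ₀⟩, mem_univ _,
        mul_pos (Finset.prod_pos fun i _ => hd _) hpos⟩
  tfae_have 5 → 4
  · exact fun h5 d hd => (h5 d hd).le
  tfae_have 4 → 2
  · intro h4 βt hβt
    by_contra hneg
    push_neg at hneg
    rcases Nat.eq_zero_or_pos n with h0 | hn1
    · subst h0
      rw [Matrix.det_isEmpty, Matrix.det_isEmpty] at hneg
      norm_num at hneg
    set p : {β : Fin n → Fin (m + n) // StrictMono β} → ℝ :=
      fun β => ((augNegI A).submatrix id β.1).det * ((augNegI B).submatrix id β.1).det with hp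
    set β₀ : {β : Fin n → Fin (m + n) // StrictMono β} := ⟨βt, hβt⟩ with hβ₀def
    have hc : p β₀ < 0 := hneg
    set c := p β₀ with hcdef
    set S : Finset (Fin (m + n)) := univ.image βt with hS
    have hScard : S.card = n := by
      rw [hS, Finset.card_image_of_injective _ hβt.injective, card_univ, Fintype.card_fin]
    set C : ℝ := ∑ β ∈ univ.erase β₀, |p β| with hC
    have hC0 : 0 ≤ C := Finset.sum_nonneg fun β _ => abs_nonneg _
    set t : ℝ := max 1 ((C + 1) / (-c)) with ht
    have h1t : (1 : ℝ) ≤ t := le_max_left _ _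
    have h0t : (0 : ℝ) < t := lt_of_lt_of_le one_pos h1t
    set d : Fin (m + n) → ℝ := fun j => if j ∈ S then t else 1 with hd
    have hdpos : ∀ j, 0 < d j := by
      intro j
      by_cases h : j ∈ S
      · simpa [hd, h] using h0t
      · simpa [hd, h] using one_pos
    have hdet := h4 d hdpos
    rw [cauchyBinet_s7] at hdet
    -- the β₀ term
    have hterm0 : (∏ i, d (β₀.1 i)) = t ^ n := by
      have : ∀ i, d (β₀.1 i) = t := by
        intro i
        have hmem : β₀.1 i ∈ S := Finset.mem_image_of_mem βt (mem_univ i)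
        simp [hd, hmem]
      rw [Finset.prod_congr rfl fun i _ => this i, Finset.prod_const, card_univ,
        Fintype.card_fin]
    -- bound on the other terms
    have hrest : ∀ β ∈ univ.erase β₀, (∏ i, d (β.1 i)) * p β ≤ t ^ (n - 1) * |p β| := by
      intro β hβmem
      have hβne : β ≠ β₀ := (Finset.mem_erase.mp hβmem).1
      have hi₀ : ∃ i₀, β.1 i₀ ∉ S := by
        by_contra hall
        push_neg at hall
        have hsub : univ.image β.1 ⊆ S := by
          intro x hx
          obtain ⟨i, _, rfl⟩ := Finset.mem_image.mp hx
          exact hall i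
        have hcard : (univ.image β.1).card = n := by
          rw [Finset.card_image_of_injective _ β.2.injective, card_univ, Fintype.card_fin]
        have heqS : univ.image β.1 = S := Finset.eq_of_subset_of_card_le hsub (by omega)
        have e1 : β.1 = ⇑(S.orderEmbOfFin hScard) :=
          Finset.orderEmbOfFin_unique hScard
            (fun i => heqS ▸ Finset.mem_image_of_mem β.1 (mem_univ i)) β.2
        have e2 : βt = ⇑(S.orderEmbOfFin hScard) :=
          Finset.orderEmbOfFin_unique hScard
            (fun i => Finset.mem_image_of_mem βt (mem_univ i)) hβt
        exact hβne (Subtype.ext (e1.trans e2.symm))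
      obtain ⟨i₀, hi₀⟩ := hi₀
      have hprodle : (∏ i, d (β.1 i)) ≤ t ^ (n - 1) := by
        have hle : ∀ i ∈ univ, d (β.1 i) ≤ (fun i => if i = i₀ then 1 else t) i := by
          intro i _
          by_cases h : i = i₀
          · subst h
            simp [hd, hi₀]
          · simp only [if_neg h, hd]
            split
            · exact le_refl t
            · exact h1t
        have hnn : ∀ i ∈ univ, 0 ≤ d (β.1 i) := fun i _ => (hdpos _).le
        refine le_trans (Finset.prod_le_prod hnn hle) ?_
        have hsplit2 : (∏ i : Fin n, (if i = i₀ then (1 : ℝ) else t))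
            = (∏ i ∈ univ.erase i₀, (if i = i₀ then (1 : ℝ) else t)) *
              (if i₀ = i₀ then (1 : ℝ) else t) :=
          (Finset.prod_erase_mul univ _ (mem_univ i₀)).symm
        rw [hsplit2, if_pos rfl, mul_one,
          Finset.prod_congr rfl (fun x hx => if_neg (Finset.ne_of_mem_erase hx)),
          Finset.prod_const, Finset.card_erase_of_mem (mem_univ i₀), card_univ,
          Fintype.card_fin]
      calc (∏ i, d (β.1 i)) * p β ≤ (∏ i, d (β.1 i)) * |p β| :=
            mul_le_mul_of_nonneg_left (le_abs_self _)
              (Finset.prod_nonneg fun i _ => (hdpos _).le)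
        _ ≤ t ^ (n - 1) * |p β| := mul_le_mul_of_nonneg_right hprodle (abs_nonneg _)
    have hsplit : ∑ β : {β : Fin n → Fin (m + n) // StrictMono β},
        (∏ i, d (β.1 i)) * p β
        = (∏ i, d (β₀.1 i)) * p β₀ + ∑ β ∈ univ.erase β₀, (∏ i, d (β.1 i)) * p β :=
      (Finset.add_sum_erase univ _ (mem_univ β₀)).symm
    have hrestsum : ∑ β ∈ univ.erase β₀, (∏ i, d (β.1 i)) * p β ≤ t ^ (n - 1) * C := by
      rw [hC, Finset.mul_sum]
      exact Finset.sum_le_sum hrest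
    have hdetle : (0:ℝ) ≤ t ^ n * c + t ^ (n - 1) * C := by
      calc (0:ℝ) ≤ _ := hdet
        _ = (∏ i, d (β₀.1 i)) * p β₀ + ∑ β ∈ univ.erase β₀, (∏ i, d (β.1 i)) * p β := by
            rw [← hsplit]
        _ ≤ t ^ n * c + t ^ (n - 1) * C := by
            rw [hterm0]
            exact add_le_add_right hrestsum _
    -- now derive contradiction
    have h2t : (C + 1) / (-c) ≤ t := le_max_right _ _
    have hct : c * t ≤ -(C + 1) := by
      have hmc : (0:ℝ) < -c := by linarith
      have := (div_le_iff₀ hmc).mp h2t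
      nlinarith
    have htn : t ^ n = t ^ (n - 1) * t := by
      rw [← pow_succ]
      congr 1
      omega
    have hpow : (1:ℝ) ≤ t ^ (n - 1) := one_le_pow₀ h1t
    nlinarith [hdetle, hct, hpow, htn]
  tfae_finish
end

section
/- Let Γ ∈ ℝ^{n×m} be nonzero with rank r, and let 𝓥 ⊆ ℝ^{m×n} be a set of matrices such that for every V ∈ 𝓥, the sum of r×r principal minors of ΓV is strictly positive (or strictly negative, uniformly over 𝓥), and such that 𝓥 is strongly stable under path integration. Let v be C¹ on the line segment [x,y] joining x, y ∈ ℝⁿ with y − x ∈ im(Γ)\{0}, with Dv(p) ∈ closure(𝓥) for all p ∈ [x,y] and Dv(p) ∈ 𝓥 for some p ∈ [x,y]. Then Γ·v(x) ≠ Γ·v(y). -/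
/-- Entrywise integral of a matrix-valued path over `[0,1]`. -/
noncomputable def pathIntegral {m n : ℕ} (γ : ℝ → Matrix (Fin m) (Fin n) ℝ) :
    Matrix (Fin m) (Fin n) ℝ :=
  Matrix.of fun i j => ∫ s in (0:ℝ)..1, γ s i j

/-- A set of matrices is strongly stable under path integration if the integral of any
continuous path in its closure which meets the set lies in the set. -/
def StronglyStableUnderPathIntegration {m n : ℕ}
    (𝓥 : Set (Matrix (Fin m) (Fin n) ℝ)) : Prop :=
  ∀ γ : ℝ → Matrix (Fin m) (Fin n) ℝ, ContinuousOn γ (Set.Icc 0 1) →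
    (∀ s ∈ Set.Icc (0:ℝ) 1, γ s ∈ closure 𝓥) →
    (∃ c ∈ Set.Icc (0:ℝ) 1, γ c ∈ 𝓥) →
    pathIntegral γ ∈ 𝓥

open Matrix Finset Polynomial Module

lemma det_piecewise_single {N : ℕ} {R : Type*} [CommRing R] (S : Finset (Fin N))
    (M : Fin N → Fin N → R) :
    (Matrix.of (S.piecewise (fun i => Pi.single i (1:R)) M)).det
      = ((Matrix.of M).submatrix (Subtype.val : {x // ¬ x ∈ S} → Fin N) Subtype.val).det := by
  classical
  set e : {x // x ∈ S} ⊕ {x // ¬ x ∈ S} ≃ Fin N := Equiv.sumCompl (· ∈ S)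
  rw [← Matrix.det_submatrix_equiv_self e]
  have : (Matrix.of (S.piecewise (fun i => Pi.single i (1:R)) M)).submatrix e e =
      Matrix.fromBlocks 1 0 (((Matrix.of M).submatrix Subtype.val Subtype.val))
        ((Matrix.of M).submatrix (Subtype.val : {x // ¬ x ∈ S} → Fin N) Subtype.val) := by
    ext i j
    cases i with
    | inl i => cases j with
      | inl j =>
        simp [e, Finset.piecewise, i.2, Matrix.one_apply, Pi.single_apply]
        exact if_congr eq_comm rfl rfl
      | inr j =>
        have hj : (j : Fin N) ≠ (i : Fin N) := fun h => j.2 (h ▸ i.2)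
        simp [e, Finset.piecewise, i.2, Pi.single_apply, hj]
    | inr i => cases j with
      | inl j => simp [e, Finset.piecewise, i.2]
      | inr j => simp [e, Finset.piecewise, i.2]
  rw [this, Matrix.det_fromBlocks_zero₁₂, Matrix.det_one, one_mul]

lemma subtype_det_eq {N r : ℕ} (A : Matrix (Fin N) (Fin N) ℝ) (T : Finset (Fin N))
    (hT : T.card = r) :
    (A.submatrix (Subtype.val : {x // x ∈ T} → Fin N) Subtype.val).det
      = (A.submatrix (⇑(T.orderEmbOfFin hT)) (⇑(T.orderEmbOfFin hT))).det := by
  rw [← Matrix.det_submatrix_equiv_self (T.orderIsoOfFin hT).toEquiv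
      (A.submatrix Subtype.val Subtype.val)]
  congr 1

lemma charpoly_coeff_eq {N : ℕ} (r : ℕ) (hr : r ≤ N) (A : Matrix (Fin N) (Fin N) ℝ) :
    (Matrix.charpoly A).coeff (N - r) = (-1)^r * sumPrincMinors r A := by
  classical
  set u : Fin N → Fin N → ℝ[X] := fun i => (Polynomial.X : ℝ[X]) • (Pi.single i (1:ℝ[X]) : Fin N → ℝ[X]) with hu
  set w : Fin N → Fin N → ℝ[X] := fun i j => -Polynomial.C (A i j) with hw
  have hchar : Matrix.charpoly A = (Matrix.of (u + w)).det := by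
    unfold Matrix.charpoly
    congr 1
    ext i j
    by_cases h : i = j <;>
      simp [Matrix.charmatrix, hu, hw, h, Pi.single_apply, Matrix.one_apply, sub_eq_add_neg]
  have hsplit : (Matrix.of (u + w)).det
      = ∑ S : Finset (Fin N), (Matrix.of (S.piecewise u w)).det :=
    (Matrix.detRowAlternating : AlternatingMap ℝ[X] (Fin N → ℝ[X]) ℝ[X]
      (Fin N)).toMultilinearMap.map_add_univ u w
  have hS : ∀ S : Finset (Fin N), (Matrix.of (S.piecewise u w)).det
      = Polynomial.X ^ S.card * Polynomial.C ((-1:ℝ)^(N - S.card)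
          * (A.submatrix (Subtype.val : {x // ¬ x ∈ S} → Fin N) Subtype.val).det) := by
    intro S
    set q : Fin N → Fin N → ℝ[X] :=
      S.piecewise (fun i => Pi.single i (1:ℝ[X])) w with hq
    have h1 : S.piecewise u w = S.piecewise (fun i => (Polynomial.X : ℝ[X]) • q i) q := by
      funext i
      by_cases h : i ∈ S <;> simp [hq, hu, Finset.piecewise, h]
    have h2 : (Matrix.of (S.piecewise u w)).det
        = (∏ _i ∈ S, (Polynomial.X : ℝ[X])) • (Matrix.of q).det := by
      rw [h1]
      exact (Matrix.detRowAlternating : AlternatingMap ℝ[X] (Fin N → ℝ[X]) ℝ[X]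
        (Fin N)).toMultilinearMap.map_piecewise_smul (fun _ => Polynomial.X) q S
    have h3 : Matrix.of q
        = (Matrix.of (S.piecewise (fun i => Pi.single i (1:ℝ)) (fun i j => -A i j))).map
            Polynomial.C := by
      ext i j
      by_cases h : i ∈ S <;>
        simp [hq, hw, Finset.piecewise, h, Pi.single_apply, apply_ite]
    have h4 : (Matrix.of q).det
        = Polynomial.C ((Matrix.of (S.piecewise (fun i => Pi.single i (1:ℝ))
            (fun i j => -A i j))).det) := by
      rw [h3]
      exact (RingHom.map_det Polynomial.C _).symm
    have h5 : (Matrix.of (S.piecewise (fun i => Pi.single i (1:ℝ)) (fun i j => -A i j))).det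
        = (-1:ℝ)^(N - S.card)
          * (A.submatrix (Subtype.val : {x // ¬ x ∈ S} → Fin N) Subtype.val).det := by
      rw [det_piecewise_single S (fun i j => -A i j)]
      have : (Matrix.of (fun i j => -A i j)).submatrix
          (Subtype.val : {x // ¬ x ∈ S} → Fin N) (Subtype.val : {x // ¬ x ∈ S} → Fin N)
          = -(A.submatrix (Subtype.val : {x // ¬ x ∈ S} → Fin N)
              (Subtype.val : {x // ¬ x ∈ S} → Fin N)) := by
        ext i j; simp
      rw [this, Matrix.det_neg]
      have hcard : Fintype.card {x // ¬ x ∈ S} = N - S.card := by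
        simp [Fintype.card_subtype_compl, Fintype.card_coe]
      rw [hcard]
    rw [h2, h4, h5, Finset.prod_const, smul_eq_mul]
  have hcoeff : (Matrix.charpoly A).coeff (N - r)
      = ∑ S : Finset (Fin N), if S.card = N - r then
          (-1:ℝ)^(N - S.card)
            * (A.submatrix (Subtype.val : {x // ¬ x ∈ S} → Fin N) Subtype.val).det
        else 0 := by
    rw [hchar, hsplit, Polynomial.finset_sum_coeff]
    refine Finset.sum_congr rfl fun S _ => ?_
    rw [hS S, mul_comm, Polynomial.C_mul_X_pow_eq_monomial, Polynomial.coeff_monomial]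
  rw [hcoeff]
  have det_compl_subtype : ∀ S : Finset (Fin N),
      (A.submatrix (Subtype.val : {x // ¬ x ∈ S} → Fin N) Subtype.val).det
        = (A.submatrix (Subtype.val : {x // x ∈ Sᶜ} → Fin N) Subtype.val).det := by
    intro S
    rw [← Matrix.det_submatrix_equiv_self
      (Equiv.subtypeEquivRight (fun x => (Finset.mem_compl (s := S) (a := x))))
      (A.submatrix Subtype.val Subtype.val)]
    congr 1
  unfold sumPrincMinors
  rw [Finset.mul_sum]
  refine Fintype.sum_equiv ⟨fun T : Finset (Fin N) => Tᶜ, fun T => Tᶜ, fun T => compl_compl T, fun T => compl_compl T⟩ _ _ fun S => ?_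
  have hSN : S.card ≤ N := by simpa using (Finset.card_le_univ S)
  by_cases h : S.card = N - r
  · have hc : Sᶜ.card = r := by
      rw [Finset.card_compl]
      simp only [Fintype.card_fin]
      omega
    have hNS : N - S.card = r := by omega
    simp only [h, if_pos rfl, Equiv.coe_fn_mk, dif_pos hc, hNS]
    rw [det_compl_subtype, subtype_det_eq A Sᶜ hc, if_pos trivial, Nat.sub_sub_self hr]
  · have hc : ¬ (Sᶜ.card = r) := by
      rw [Finset.card_compl]
      simp only [Fintype.card_fin]
      omega
    simp [h, hc]

lemma key_lemma {N : ℕ} (A : Matrix (Fin N) (Fin N) ℝ)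
    (U : Submodule ℝ (Fin N → ℝ)) (hrange : LinearMap.range A.mulVecLin ≤ U)
    (w : Fin N → ℝ) (hwU : w ∈ U) (hw : w ≠ 0) (hAw : A.mulVec w = 0) :
    (Matrix.charpoly A).coeff (N - Module.finrank ℝ U) = 0 := by
  classical
  set r := Module.finrank ℝ U with hr
  set φ := A.mulVecLin with hφ
  have hN : Module.finrank ℝ (Fin N → ℝ) = N := by simp
  have hrN : r ≤ N := hN ▸ Submodule.finrank_le U
  -- the restriction of φ to U has rank < r
  have h1 : Module.finrank ℝ (LinearMap.range (φ.domRestrict U)) < r := by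
    have hker : 0 < Module.finrank ℝ (LinearMap.ker (φ.domRestrict U)) := by
      rw [Module.finrank_pos_iff_exists_ne_zero (R := ℝ) (M := LinearMap.ker (φ.domRestrict U))]
      refine ⟨⟨⟨w, hwU⟩, by simp [φ, hAw]⟩, ?_⟩
      intro h
      apply hw
      have := congrArg (fun z => ((z : U) : Fin N → ℝ)) (Subtype.ext_iff.mp h)
      simpa using this
    have := LinearMap.finrank_range_add_finrank_ker (φ.domRestrict U)
    rw [hr]
    omega
  -- range of φ^2 is contained in range of the restriction
  have h2 : LinearMap.range (φ^2) ≤ LinearMap.range (φ.domRestrict U) := by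
    rw [pow_two]
    rintro _ ⟨z, rfl⟩
    exact ⟨⟨φ z, hrange ⟨z, rfl⟩⟩, rfl⟩
  have h2' : Module.finrank ℝ (LinearMap.range (φ^2)) < r :=
    lt_of_le_of_lt (Submodule.finrank_mono h2) h1
  -- hence the kernel of φ^2 has dimension > N - r
  have h3 : N - r < Module.finrank ℝ (LinearMap.ker (φ^2)) := by
    have := LinearMap.finrank_range_add_finrank_ker (φ^2)
    rw [hN] at this
    omega
  -- kernel of φ^2 sits inside the generalized 0-eigenspace
  have h4 : LinearMap.ker (φ^2) ≤ Module.End.maxGenEigenspace φ 0 := by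
    intro z hz
    rw [Module.End.mem_maxGenEigenspace]
    exact ⟨2, by simpa using hz⟩
  have h5 : N - r < (LinearMap.charpoly φ).natTrailingDegree := by
    rw [← LinearMap.finrank_maxGenEigenspace_zero_eq]
    exact lt_of_lt_of_le h3 (Submodule.finrank_mono h4)
  have h6 : LinearMap.charpoly φ = Matrix.charpoly A := by
    rw [← LinearMap.charpoly_toMatrix φ (Pi.basisFun ℝ (Fin N))]
    congr 1
    rw [LinearMap.toMatrix_eq_toMatrix', hφ, ← Matrix.toLin'_apply', LinearMap.toMatrix'_toLin']
  rw [← h6]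
  exact Polynomial.coeff_eq_zero_of_lt_natTrailingDegree h5

lemma ftc_lemma (n m : ℕ) (x y : Fin n → ℝ)
    (v : (Fin n → ℝ) → Fin m → ℝ) (Dv : (Fin n → ℝ) → Matrix (Fin m) (Fin n) ℝ)
    (hderiv : ∀ p ∈ segment ℝ x y,
      HasFDerivAt v (LinearMap.toContinuousLinearMap (Dv p).mulVecLin) p)
    (hDvcont : ContinuousOn Dv (segment ℝ x y)) :
    v y - v x = (pathIntegral (fun s => Dv (x + s • (y - x)))).mulVec (y - x) := by
  classical
  set p : ℝ → (Fin n → ℝ) := fun s => x + s • (y - x) with hp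
  have hpcont : Continuous p := by continuity
  have hpmem : ∀ s ∈ Set.Icc (0:ℝ) 1, p s ∈ segment ℝ x y := by
    intro s hs
    rw [segment_eq_image']
    exact ⟨s, hs, rfl⟩
  set γ : ℝ → Matrix (Fin m) (Fin n) ℝ := fun s => Dv (p s) with hγ
  have hγcont : ContinuousOn γ (Set.Icc 0 1) :=
    hDvcont.comp hpcont.continuousOn hpmem
  have hentry : ∀ (i : Fin m) (j : Fin n),
      ContinuousOn (fun s => γ s i j) (Set.Icc (0:ℝ) 1) := by
    intro i j
    have hc : Continuous (fun M : Matrix (Fin m) (Fin n) ℝ => M i j) :=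
      (continuous_apply j).comp (continuous_apply i)
    exact hc.comp_continuousOn hγcont
  have huIcc : Set.uIcc (0:ℝ) 1 = Set.Icc 0 1 := Set.uIcc_of_le zero_le_one
  funext j
  have hderiv' : ∀ s ∈ Set.uIcc (0:ℝ) 1,
      HasDerivAt (fun t => v (p t) j) (((γ s).mulVec (y - x)) j) s := by
    intro s hs
    rw [huIcc] at hs
    have hps : HasDerivAt p (y - x) s := by
      have h := ((hasDerivAt_id s).smul_const (y - x)).const_add x
      rw [one_smul] at h
      exact h
    have hv : HasDerivAt (fun t => v (p t))
        ((LinearMap.toContinuousLinearMap (Dv (p s)).mulVecLin) (y - x)) s :=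
      (hderiv (p s) (hpmem s hs)).comp_hasDerivAt s hps
    have := hasDerivAt_pi.mp hv j
    simpa [γ] using this
  have hmc : ContinuousOn (fun s => ((γ s).mulVec (y - x)) j) (Set.Icc (0:ℝ) 1) := by
    have : (fun s => ((γ s).mulVec (y - x)) j)
        = fun s => ∑ k, γ s j k * (y - x) k := rfl
    rw [this]
    exact continuousOn_finset_sum _ fun k _ => (hentry j k).mul continuousOn_const
  have hint : IntervalIntegrable (fun s => ((γ s).mulVec (y - x)) j)
      MeasureTheory.volume 0 1 := by
    apply ContinuousOn.intervalIntegrable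
    rwa [huIcc]
  have hFTC := intervalIntegral.integral_eq_sub_of_hasDerivAt hderiv' hint
  have hps0 : p 0 = x := by simp [hp]
  have hps1 : p 1 = y := by simp [hp]
  have hswap : (∫ s in (0:ℝ)..1, ((γ s).mulVec (y - x)) j)
      = ((pathIntegral γ).mulVec (y - x)) j := by
    have : ∀ s, ((γ s).mulVec (y - x)) j = ∑ k, γ s j k * (y - x) k := fun s => rfl
    simp only [this]
    rw [intervalIntegral.integral_finset_sum]
    · simp only [intervalIntegral.integral_mul_const]
      rfl
    · intro k _
      apply ContinuousOn.intervalIntegrable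
      rw [huIcc]
      exact (hentry j k).mul continuousOn_const

  rw [hswap, hps0, hps1] at hFTC
  simpa using hFTC.symm


/-- Injectivity along cosets of `im Γ`: if the reduced determinants `det_Γ(ΓV)` are
uniformly positive (or uniformly negative) over a set `𝓥` strongly stable under path
integration, and `v` is `C¹` along the segment `[x,y]` with derivative in `closure 𝓥`
(and in `𝓥` somewhere), where `y − x ∈ im(Γ)\{0}`, then `Γ v(x) ≠ Γ v(y)`. -/
theorem stmt_12 (n m : ℕ) (Γ : Matrix (Fin n) (Fin m) ℝ) (hΓ : Γ ≠ 0)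
    (𝓥 : Set (Matrix (Fin m) (Fin n) ℝ))
    (hsign : (∀ V ∈ 𝓥, 0 < sumPrincMinors Γ.rank (Γ * V)) ∨
             (∀ V ∈ 𝓥, sumPrincMinors Γ.rank (Γ * V) < 0))
    (hstable : StronglyStableUnderPathIntegration 𝓥)
    (x y : Fin n → ℝ) (hxy : y - x ∈ LinearMap.range Γ.mulVecLin) (hne : y ≠ x)
    (v : (Fin n → ℝ) → Fin m → ℝ) (Dv : (Fin n → ℝ) → Matrix (Fin m) (Fin n) ℝ)
    (hderiv : ∀ p ∈ segment ℝ x y,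
      HasFDerivAt v (LinearMap.toContinuousLinearMap (Dv p).mulVecLin) p)
    (hDvcont : ContinuousOn Dv (segment ℝ x y))
    (hclos : ∀ p ∈ segment ℝ x y, Dv p ∈ closure 𝓥)
    (hmem : ∃ p ∈ segment ℝ x y, Dv p ∈ 𝓥) :
    Γ.mulVec (v x) ≠ Γ.mulVec (v y) := by
  classical
  have hft := ftc_lemma n m x y v Dv hderiv hDvcont
  set p : ℝ → (Fin n → ℝ) := fun s => x + s • (y - x) with hp
  set γ : ℝ → Matrix (Fin m) (Fin n) ℝ := fun s => Dv (p s) with hγ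
  have hpcont : Continuous p := by continuity
  have hpmem : ∀ s ∈ Set.Icc (0:ℝ) 1, p s ∈ segment ℝ x y := by
    intro s hs
    rw [segment_eq_image']
    exact ⟨s, hs, rfl⟩
  have hγcont : ContinuousOn γ (Set.Icc 0 1) :=
    hDvcont.comp hpcont.continuousOn hpmem
  have hVmem : pathIntegral γ ∈ 𝓥 := by
    refine hstable γ hγcont (fun s hs => hclos _ (hpmem s hs)) ?_
    obtain ⟨p₀, hp₀seg, hp₀V⟩ := hmem
    rw [segment_eq_image'] at hp₀seg
    obtain ⟨c, hc, hcp⟩ := hp₀seg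
    refine ⟨c, hc, ?_⟩
    have hcp' : x + c • (y - x) = p₀ := hcp
    rw [hγ]; simp only [hp]; rw [hcp']; exact hp₀V
  set W := pathIntegral γ with hW
  have hsum_ne : sumPrincMinors Γ.rank (Γ * W) ≠ 0 := by
    rcases hsign with hs | hs
    · exact ne_of_gt (hs W hVmem)
    · exact ne_of_lt (hs W hVmem)
  intro heq
  have hvec : (Γ * W).mulVec (y - x) = 0 := by
    rw [← Matrix.mulVec_mulVec, ← hft, Matrix.mulVec_sub, heq, sub_self]
  set U := LinearMap.range Γ.mulVecLin with hU
  have hrank : Γ.rank = Module.finrank ℝ U := rfl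
  have hrange : LinearMap.range (Γ * W).mulVecLin ≤ U := by
    rw [Matrix.mulVecLin_mul]
    exact LinearMap.range_comp_le_range _ _
  have hwne : y - x ≠ 0 := sub_ne_zero.mpr hne
  have hcoeff0 := key_lemma (Γ * W) U hrange (y - x) hxy hwne hvec
  have hrn : Γ.rank ≤ n := by
    rw [hrank]
    have := Submodule.finrank_le U
    simpa using this
  rw [← hrank, charpoly_coeff_eq Γ.rank hrn (Γ * W)] at hcoeff0
  rcases mul_eq_zero.mp hcoeff0 with h | h
  · exact pow_ne_zero _ (by norm_num : (-1:ℝ) ≠ 0) h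
  · exact hsum_ne h
end

section
/- Let w : ℝⁿ_{>0} → ℝᵐ_{>0} be defined by w(x) = exp(M · log x), where M ∈ ℝ^{m×n} and exp, log act componentwise. Then for any x, y ∈ ℝⁿ_{>0} there exist a positive diagonal n×n matrix D̄ and a positive diagonal m×m matrix D̃ (depending on x, y) such that w(y) − w(x) = D̃ · M · D̄ · (y − x). -/
/-- Secant slope of a function that preserves strict order in both directions is positive. -/
lemma slope_aux (g : ℝ → ℝ) (a b : ℝ) (h1 : a < b → g a < g b) (h2 : b < a → g b < g a) :
    ∃ d, 0 < d ∧ g b - g a = d * (b - a) := by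
  rcases lt_trichotomy a b with h | h | h
  · refine ⟨(g b - g a) / (b - a), div_pos (sub_pos.2 (h1 h)) (sub_pos.2 h), ?_⟩
    rw [div_mul_cancel₀ _ (sub_ne_zero.2 (ne_of_gt h))]
  · exact ⟨1, one_pos, by rw [h]; ring⟩
  · refine ⟨(g b - g a) / (b - a), div_pos_of_neg_of_neg (sub_neg.2 (h2 h)) (sub_neg.2 h), ?_⟩
    rw [div_mul_cancel₀ _ (sub_ne_zero.2 (ne_of_lt h))]

/-- For the generalised monomial map `w(x) = exp(M·log x)` on the positive orthant,
differences factor through positive diagonal matrices: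
`w(y) − w(x) = D̃ · M · D̄ · (y − x)`. -/
theorem stmt_15 (n m : ℕ) (M : Matrix (Fin m) (Fin n) ℝ)
    (x y : Fin n → ℝ) (hx : ∀ i, 0 < x i) (hy : ∀ i, 0 < y i) :
    ∃ (dbar : Fin n → ℝ) (dtil : Fin m → ℝ), (∀ i, 0 < dbar i) ∧ (∀ j, 0 < dtil j) ∧
      ((fun j => Real.exp (M.mulVec (fun i => Real.log (y i)) j)) -
        (fun j => Real.exp (M.mulVec (fun i => Real.log (x i)) j)))
        = (Matrix.diagonal dtil * M * Matrix.diagonal dbar).mulVec (y - x) := by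
  have hbar : ∀ i, ∃ d, 0 < d ∧ Real.log (y i) - Real.log (x i) = d * (y i - x i) := by
    intro i
    exact slope_aux Real.log (x i) (y i)
      (fun h => Real.log_lt_log (hx i) h) (fun h => Real.log_lt_log (hy i) h)
  choose dbar hdbar_pos hdbar_eq using hbar
  have htil : ∀ j, ∃ d, 0 < d ∧
      Real.exp (M.mulVec (fun i => Real.log (y i)) j) -
        Real.exp (M.mulVec (fun i => Real.log (x i)) j)
      = d * (M.mulVec (fun i => Real.log (y i)) j -
          M.mulVec (fun i => Real.log (x i)) j) := by
    intro j
    exact slope_aux Real.exp _ _ (fun h => Real.exp_lt_exp.2 h) (fun h => Real.exp_lt_exp.2 h)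
  choose dtil hdtil_pos hdtil_eq using htil
  refine ⟨dbar, dtil, hdbar_pos, hdtil_pos, ?_⟩
  funext j
  have key : (Matrix.diagonal dtil * M * Matrix.diagonal dbar).mulVec (y - x) j
      = dtil j * (M.mulVec (fun i => Real.log (y i)) j -
          M.mulVec (fun i => Real.log (x i)) j) := by
    simp only [Matrix.mulVec, Matrix.mul_apply, dotProduct, Matrix.diagonal_apply,
      Pi.sub_apply]
    rw [← Finset.sum_sub_distrib, Finset.mul_sum]
    refine Finset.sum_congr rfl fun i _ => ?_
    simp only [ite_mul, mul_ite, zero_mul, mul_zero, Finset.sum_ite_eq, Finset.sum_ite_eq',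
      Finset.mem_univ, if_true]
    rw [← mul_sub, hdbar_eq i]
    ring
  rw [key]
  simpa using hdtil_eq j
end

section
/- Let Γ ∈ ℝ^{n×m} and M ∈ ℝ^{m×n} be such that Γ and −Mᵀ are compatible: for every pair of equal-size index sets α, β, Γ[α|β]·(−Mᵀ)[α|β] ≥ 0. Then for every positive diagonal m×m matrix E, every constant c ∈ ℝⁿ, and every C¹ function q : ℝⁿ_{>0} → ℝⁿ with Dq(x) a positive diagonal matrix for all x, the map x ↦ Γ·E·exp(M·log x) − q(x) + c is injective on ℝⁿ_{>0}. -/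
open Finset Matrix Equiv

theorem det_mul_expand_s17 {k m : ℕ} (A : Matrix (Fin k) (Fin m) ℝ) (B : Matrix (Fin m) (Fin k) ℝ) :
    (A * B).det = ∑ p : Fin k → Fin m, (∏ i, B (p i) i) * (A.submatrix id p).det := by
  have h1 : (A * B).det = ((A * B)ᵀ).det := (Matrix.det_transpose _).symm
  rw [h1, Matrix.transpose_mul]
  have h2 : (Bᵀ * Aᵀ) = fun i => ∑ j : Fin m, B j i • (Aᵀ j) := by
    ext i l
    simp [Matrix.mul_apply, Matrix.transpose_apply, mul_comm]
  rw [show (Bᵀ * Aᵀ).det = Matrix.detRowAlternating (Bᵀ * Aᵀ) from rfl, h2]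
  rw [show (Matrix.detRowAlternating (R := ℝ) (n := Fin k)
        (fun i => ∑ j : Fin m, B j i • (Aᵀ j)) : ℝ)
      = (Matrix.detRowAlternating (R := ℝ) (n := Fin k)).toMultilinearMap
        (fun i => ∑ j : Fin m, (fun i' j' => B j' i' • (Aᵀ j')) i j) from rfl]
  rw [MultilinearMap.map_sum]
  refine Finset.sum_congr rfl fun p _ => ?_
  rw [MultilinearMap.map_smul_univ]
  have h3 : (fun i => Aᵀ (p i)) = (A.submatrix id p)ᵀ := by
    ext i l; rfl
  simp only [h3, smul_eq_mul]
  congr 1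
  exact Matrix.det_transpose _

/-- image of an orderEmbOfFin composed with a permutation -/
theorem image_embPerm {m k : ℕ} (t : Finset (Fin m)) (ht : t.card = k) (σ : Equiv.Perm (Fin k)) :
    Finset.univ.image ((t.orderEmbOfFin ht) ∘ σ) = t := by
  ext a
  simp only [Finset.mem_image, Finset.mem_univ, true_and, Function.comp_apply]
  constructor
  · rintro ⟨i, rfl⟩; exact Finset.orderEmbOfFin_mem _ _ _
  · intro ha
    have := Finset.range_orderEmbOfFin t ht
    have : a ∈ Set.range (t.orderEmbOfFin ht) := by rw [this]; exact ha
    obtain ⟨i, rfl⟩ := this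
    exact ⟨σ.symm i, by simp⟩

theorem cauchy_binet_s17 {k m : ℕ} (A : Matrix (Fin k) (Fin m) ℝ) (B : Matrix (Fin m) (Fin k) ℝ) :
    (A * B).det = ∑ t : {t : Finset (Fin m) // t.card = k},
      (A.submatrix id (t.1.orderEmbOfFin t.2)).det * (B.submatrix (t.1.orderEmbOfFin t.2) id).det := by
  rw [det_mul_expand_s17]
  have hres : ∑ p : Fin k → Fin m, (∏ i, B (p i) i) * (A.submatrix id p).det
      = ∑ p ∈ Finset.univ.filter (fun p : Fin k → Fin m => Function.Injective p),
          (∏ i, B (p i) i) * (A.submatrix id p).det := by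
    refine (Finset.sum_filter_of_ne fun p _ hne => ?_).symm
    by_contra hinj
    rw [Function.Injective] at hinj
    push_neg at hinj
    obtain ⟨i, j, hpij, hij⟩ := hinj
    exact hne (by rw [Matrix.det_zero_of_column_eq hij (fun l => by simp [hpij]), mul_zero])
  rw [hres]
  have hbij : ∑ x : (Σ _t : {t : Finset (Fin m) // t.card = k}, Equiv.Perm (Fin k)),
        (∏ i, B ((x.1.1.orderEmbOfFin x.1.2 ∘ x.2) i) i)
          * (A.submatrix id (x.1.1.orderEmbOfFin x.1.2 ∘ x.2)).det
      = ∑ p ∈ Finset.univ.filter (fun p : Fin k → Fin m => Function.Injective p),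
          (∏ i, B (p i) i) * (A.submatrix id p).det := by
    refine Finset.sum_bij (i := fun x _ => (x.1.1.orderEmbOfFin x.1.2) ∘ x.2) ?_ ?_ ?_ ?_
    · intro x _
      simp only [Finset.mem_filter, Finset.mem_univ, true_and]
      exact (x.1.1.orderEmbOfFin x.1.2).injective.comp x.2.injective
    · intro a₁ ha₁ a₂ ha₂ hpq
      obtain ⟨⟨t₁, h₁⟩, σ₁⟩ := a₁
      obtain ⟨⟨t₂, h₂⟩, σ₂⟩ := a₂
      simp only at hpq
      have himg : t₁ = t₂ := by
        rw [← image_embPerm t₁ h₁ σ₁, ← image_embPerm t₂ h₂ σ₂, hpq]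
      subst himg
      obtain rfl : σ₁ = σ₂ := by
        apply Equiv.ext
        intro i
        exact (t₁.orderEmbOfFin h₁).injective (congrFun hpq i)
      rfl
    · intro p hp
      have hinj : Function.Injective p := (Finset.mem_filter.mp hp).2
      have hcard : (Finset.univ.image p).card = k := by
        rw [Finset.card_image_of_injective _ hinj, Finset.card_univ, Fintype.card_fin]
      set t : Finset (Fin m) := Finset.univ.image p with htdef
      have hmem : ∀ i, p i ∈ t := fun i => Finset.mem_image_of_mem p (Finset.mem_univ i)
      set σf : Fin k → Fin k := fun i => (t.orderIsoOfFin hcard).symm ⟨p i, hmem i⟩ with hσf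
      have hσinj : Function.Injective σf := by
        intro a b hab
        exact hinj (congrArg Subtype.val ((t.orderIsoOfFin hcard).symm.injective hab))
      refine ⟨⟨⟨t, hcard⟩, Equiv.ofBijective σf ((Finite.injective_iff_bijective).mp hσinj)⟩,
        Finset.mem_univ _, ?_⟩
      funext i
      show (t.orderEmbOfFin hcard) (σf i) = p i
      rw [← Finset.coe_orderIsoOfFin_apply]
      simp [hσf]
    · intro x _; rfl
  rw [← hbij, ← Finset.univ_sigma_univ, Finset.sum_sigma]
  refine Finset.sum_congr rfl fun t _ => ?_
  -- inner sum over permutations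
  have key : ∀ σ : Equiv.Perm (Fin k),
      A.submatrix id ((t.1.orderEmbOfFin t.2) ∘ σ)
        = (A.submatrix id (t.1.orderEmbOfFin t.2)).submatrix id ⇑σ := by
    intro σ; rw [Matrix.submatrix_submatrix]; rfl
  calc ∑ σ : Equiv.Perm (Fin k),
        (∏ i, B ((t.1.orderEmbOfFin t.2 ∘ σ) i) i)
          * (A.submatrix id (t.1.orderEmbOfFin t.2 ∘ σ)).det
      = ∑ σ : Equiv.Perm (Fin k),
        ((Equiv.Perm.sign σ : ℤ) * ∏ i, (B.submatrix (t.1.orderEmbOfFin t.2) id) (σ i) i)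
          * (A.submatrix id (t.1.orderEmbOfFin t.2)).det := by
        refine Finset.sum_congr rfl fun σ _ => ?_
        rw [key σ, Matrix.det_permute']
        simp only [Matrix.submatrix_apply, id_eq, Function.comp_apply]
        ring
    _ = (A.submatrix id (t.1.orderEmbOfFin t.2)).det * (B.submatrix (t.1.orderEmbOfFin t.2) id).det := by
        rw [← Finset.sum_mul, ← Matrix.det_apply', mul_comm]

theorem det_unitRows {n : ℕ} (B : Matrix (Fin n) (Fin n) ℝ) (s : Finset (Fin n)) :
    (Matrix.of (s.piecewise (B : Fin n → Fin n → ℝ) (fun i => Pi.single i 1))).det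
      = (B.submatrix (s.orderEmbOfFin rfl) (s.orderEmbOfFin rfl)).det := by
  classical
  set C := Matrix.of (s.piecewise (B : Fin n → Fin n → ℝ) (fun i => Pi.single i 1)) with hC
  let e : {a : Fin n // a ∈ s} ⊕ {a : Fin n // ¬ a ∈ s} ≃ Fin n := Equiv.sumCompl (· ∈ s)
  have h1 : C.det = (C.submatrix e e).det := (Matrix.det_submatrix_equiv_self e C).symm
  have h2 : C.submatrix e e = Matrix.fromBlocks
      (B.submatrix (fun a : {a : Fin n // a ∈ s} => (a : Fin n)) (fun a : {a : Fin n // a ∈ s} => (a : Fin n)))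
      (B.submatrix (fun a : {a : Fin n // a ∈ s} => (a : Fin n)) (fun a : {a // ¬ a ∈ s} => (a : Fin n)))
      0 1 := by
    ext i j
    rcases i with i | i <;> rcases j with j | j <;>
      simp only [Matrix.submatrix_apply, Matrix.fromBlocks_apply₁₁, Matrix.fromBlocks_apply₁₂,
        Matrix.fromBlocks_apply₂₁, Matrix.fromBlocks_apply₂₂, hC, Matrix.of_apply]
    · rw [show e (Sum.inl i) = (i : Fin n) from rfl, show e (Sum.inl j) = (j : Fin n) from rfl]
      erw [Finset.piecewise_eq_of_mem _ _ _ i.2]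
    · rw [show e (Sum.inl i) = (i : Fin n) from rfl, show e (Sum.inr j) = (j : Fin n) from rfl]
      erw [Finset.piecewise_eq_of_mem _ _ _ i.2]
    · rw [show e (Sum.inr i) = (i : Fin n) from rfl, show e (Sum.inl j) = (j : Fin n) from rfl]
      erw [Finset.piecewise_eq_of_notMem _ _ _ i.2]
      have : (j : Fin n) ≠ (i : Fin n) := fun h => i.2 (h ▸ j.2)
      simp [Pi.single_apply, this, Matrix.zero_apply]
    · rw [show e (Sum.inr i) = (i : Fin n) from rfl, show e (Sum.inr j) = (j : Fin n) from rfl]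
      erw [Finset.piecewise_eq_of_notMem _ _ _ i.2]
      simp [Pi.single_apply, Matrix.one_apply, eq_comm, Subtype.ext_iff]
  rw [h1, h2, Matrix.det_fromBlocks_zero₂₁, Matrix.det_one, mul_one]
  have h3 : (B.submatrix (fun a : {a : Fin n // a ∈ s} => (a : Fin n)) (fun a : {a : Fin n // a ∈ s} => (a : Fin n)))
      = Matrix.of fun a b : {a : Fin n // a ∈ s} => B a b := rfl
  rw [← Matrix.det_submatrix_equiv_self (s.orderIsoOfFin rfl).toEquiv,
    Matrix.submatrix_submatrix]
  congr 1

theorem det_diag_add {n : ℕ} (d : Fin n → ℝ) (B : Matrix (Fin n) (Fin n) ℝ) :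
    (Matrix.diagonal d + B).det = ∑ s : Finset (Fin n),
      (∏ i ∈ sᶜ, d i) * (B.submatrix (s.orderEmbOfFin rfl) (s.orderEmbOfFin rfl)).det := by
  classical
  have h0 : (Matrix.diagonal d + B).det
      = (Matrix.detRowAlternating (R := ℝ) (n := Fin n)).toMultilinearMap
          ((B : Fin n → Fin n → ℝ) + (Matrix.diagonal d : Fin n → Fin n → ℝ)) := by
    rw [add_comm]; rfl
  rw [h0]; erw [MultilinearMap.map_add_univ]
  refine Finset.sum_congr rfl fun s _ => ?_
  set a : Fin n → (Fin n → ℝ) := s.piecewise (B : Fin n → Fin n → ℝ) (fun i => Pi.single i 1) with ha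
  have h1 : s.piecewise (B : Fin n → Fin n → ℝ) (Matrix.diagonal d : Fin n → Fin n → ℝ)
      = sᶜ.piecewise (fun i => d i • a i) a := by
    funext i
    by_cases hi : i ∈ s
    · erw [Finset.piecewise_eq_of_mem _ _ _ hi,
        Finset.piecewise_eq_of_notMem _ _ _ (by simpa using hi), ha,
        Finset.piecewise_eq_of_mem _ _ _ hi]
    · erw [Finset.piecewise_eq_of_notMem _ _ _ hi,
        Finset.piecewise_eq_of_mem _ _ _ (by simpa using hi), ha,
        Finset.piecewise_eq_of_notMem _ _ _ hi]
      funext j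
      simp [Matrix.diagonal_apply, Pi.single_apply, eq_comm]
  rw [h1, MultilinearMap.map_piecewise_smul]
  rw [show (Matrix.detRowAlternating (R := ℝ) (n := Fin n)).toMultilinearMap a
      = (Matrix.of a).det from rfl, det_unitRows]
  simp [smul_eq_mul]

theorem keydet {n m : ℕ} (Γ : Matrix (Fin n) (Fin m) ℝ) (M : Matrix (Fin m) (Fin n) ℝ)
    (hcompat : ∀ (k : ℕ) (α : Fin k → Fin n) (β : Fin k → Fin m), StrictMono α → StrictMono β →
      0 ≤ (Γ.submatrix α β).det * ((-M.transpose).submatrix α β).det)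
    (d₁ : Fin m → ℝ) (h₁ : ∀ j, 0 < d₁ j) (d₂ : Fin n → ℝ) (h₂ : ∀ i, 0 < d₂ i)
    (d : Fin n → ℝ) (hd : ∀ i, 0 < d i) :
    0 < (Matrix.diagonal d + (-Γ) * Matrix.diagonal d₁ * M * Matrix.diagonal d₂).det := by
  classical
  set B : Matrix (Fin n) (Fin n) ℝ := (-Γ) * Matrix.diagonal d₁ * M * Matrix.diagonal d₂ with hB
  -- principal minors of B are nonnegative
  have hminor : ∀ s : Finset (Fin n),
      0 ≤ (B.submatrix (s.orderEmbOfFin rfl) (s.orderEmbOfFin rfl)).det := by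
    intro s
    set e := s.orderEmbOfFin rfl with he
    have hsplit : B.submatrix e e
        = (((-Γ) * Matrix.diagonal d₁).submatrix e (id : Fin m → Fin m))
          * ((M * Matrix.diagonal d₂).submatrix (id : Fin m → Fin m) e) := by
      have hassoc : B = ((-Γ) * Matrix.diagonal d₁) * (M * Matrix.diagonal d₂) := by
        rw [hB]; rw [Matrix.mul_assoc, Matrix.mul_assoc, ← Matrix.mul_assoc (diagonal d₁)]
      ext i j
      rw [hassoc]
      simp [Matrix.mul_apply]
    rw [hsplit, cauchy_binet_s17]
    refine Finset.sum_nonneg fun t _ => ?_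
    set f := t.1.orderEmbOfFin t.2 with hf
    have hA : (((-Γ) * Matrix.diagonal d₁).submatrix e (id : Fin m → Fin m)).submatrix id f
        = ((-Γ).submatrix e f) * Matrix.diagonal (fun j => d₁ (f j)) := by
      ext i j
      simp [Matrix.mul_apply, Matrix.diagonal_apply, Matrix.submatrix_apply]
    have hBb : (((M * Matrix.diagonal d₂).submatrix (id : Fin m → Fin m) e)).submatrix f id
        = (M.submatrix f e) * Matrix.diagonal (fun i => d₂ (e i)) := by
      ext i j
      simp [Matrix.mul_apply, Matrix.diagonal_apply, Matrix.submatrix_apply]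
    rw [hA, hBb, Matrix.det_mul, Matrix.det_mul, Matrix.det_diagonal, Matrix.det_diagonal]
    have hneg : ((-Γ).submatrix e f).det = (-1 : ℝ) ^ s.card * (Γ.submatrix e f).det := by
      have : (-Γ).submatrix e f = -(Γ.submatrix e f) := by ext i j; simp
      rw [this, Matrix.det_neg, Fintype.card_fin]
    have hnegM : ((-M.transpose).submatrix e f).det
        = (-1 : ℝ) ^ s.card * (M.submatrix f e).det := by
      have : (-M.transpose).submatrix e f = -((M.submatrix f e).transpose) := by
        ext i j; simp [Matrix.transpose_apply]
      rw [this, Matrix.det_neg, Matrix.det_transpose, Fintype.card_fin]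
    have hc := hcompat s.card e f e.strictMono f.strictMono
    rw [hnegM] at hc
    have hprod : ((-Γ).submatrix e f).det * (M.submatrix f e).det
        = (Γ.submatrix e f).det * ((-1 : ℝ) ^ s.card * (M.submatrix f e).det) := by
      rw [hneg]; ring
    have hkey : 0 ≤ ((-Γ).submatrix e f).det * (M.submatrix f e).det := by
      rw [hprod]; exact hc
    have p1 : 0 < ∏ j, d₁ (f j) := Finset.prod_pos fun j _ => h₁ _
    have p2 : 0 < ∏ i, d₂ (e i) := Finset.prod_pos fun i _ => h₂ _
    calc (0:ℝ) ≤ (((-Γ).submatrix e f).det * (M.submatrix f e).det) * ((∏ j, d₁ (f j)) * ∏ i, d₂ (e i)) :=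
          mul_nonneg hkey (le_of_lt (mul_pos p1 p2))
      _ = ((-Γ).submatrix e f).det * (∏ j, d₁ (f j)) * ((M.submatrix f e).det * ∏ i, d₂ (e i)) := by ring
  rw [det_diag_add]
  refine Finset.sum_pos' (fun s _ => mul_nonneg (Finset.prod_nonneg fun i _ => (hd i).le) (hminor s))
    ⟨∅, Finset.mem_univ _, ?_⟩
  haveI : IsEmpty (Fin (#(∅ : Finset (Fin n)))) := by
    simp only [Finset.card_empty]; exact Fin.isEmpty
  have h5 : (B.submatrix ((∅ : Finset (Fin n)).orderEmbOfFin rfl) ((∅ : Finset (Fin n)).orderEmbOfFin rfl)).det = 1 :=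
    Matrix.det_isEmpty
  rw [h5, mul_one]
  simpa using Finset.prod_pos fun i _ => hd i

theorem slope_of_strictMonoOn {f : ℝ → ℝ} {s : Set ℝ} (hf : StrictMonoOn f s) {a b : ℝ}
    (ha : a ∈ s) (hb : b ∈ s) : ∃ l : ℝ, 0 < l ∧ f a - f b = l * (a - b) := by
  rcases lt_trichotomy a b with h | h | h
  · exact ⟨(f a - f b) / (a - b),
      div_pos_of_neg_of_neg (sub_neg.mpr (hf ha hb h)) (sub_neg.mpr h),
      (div_mul_cancel₀ _ (sub_ne_zero.mpr h.ne)).symm⟩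
  · exact ⟨1, one_pos, by simp [h]⟩
  · exact ⟨(f a - f b) / (a - b),
      div_pos (sub_pos.mpr (hf hb ha h)) (sub_pos.mpr h),
      (div_mul_cancel₀ _ (sub_ne_zero.mpr h.ne')).symm⟩

theorem qdiff {n : ℕ} (q dq : (Fin n → ℝ) → (Fin n → ℝ))
    (hq : ∀ x, (∀ i, 0 < x i) →
      HasFDerivAt q (LinearMap.toContinuousLinearMap (Matrix.diagonal (dq x)).mulVecLin) x)
    (hdq : ∀ x, (∀ i, 0 < x i) → ∀ i, 0 < dq x i)
    (hdqc : ContinuousOn dq {x | ∀ i, 0 < x i})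
    (x y : Fin n → ℝ) (hx : ∀ i, 0 < x i) (hy : ∀ i, 0 < y i) :
    ∃ D : Fin n → ℝ, (∀ i, 0 < D i) ∧ ∀ i, q x i - q y i = D i * (x i - y i) := by
  set p : ℝ → (Fin n → ℝ) := fun t => y + t • (x - y) with hp
  have hp0 : p 0 = y := by simp [hp]
  have hp1 : p 1 = x := by simp [hp]
  have hppos : ∀ t ∈ Set.Icc (0:ℝ) 1, ∀ i, 0 < p t i := by
    intro t ⟨ht0, ht1⟩ i
    simp only [hp, Pi.add_apply, Pi.smul_apply, Pi.sub_apply, smul_eq_mul]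
    by_cases h : t < 1
    · nlinarith [mul_pos (sub_pos.mpr h) (hy i), mul_nonneg ht0 (hx i).le]
    · have : t = 1 := le_antisymm ht1 (not_lt.mp h)
      subst this; nlinarith [hx i]
  have hpc : Continuous p := by
    apply continuous_const.add
    exact (continuous_id.smul continuous_const)
  have hpderiv : ∀ t : ℝ, HasDerivAt p (x - y) t := by
    intro t
    have h1 : HasDerivAt (fun t : ℝ => t • (x - y)) (x - y) t := by
      simpa using (hasDerivAt_id t).smul_const (x - y)
    exact h1.const_add y
  have hcomp : ∀ t ∈ Set.Icc (0:ℝ) 1,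
      HasDerivAt (fun t => q (p t)) (fun i => dq (p t) i * (x i - y i)) t := by
    intro t ht
    have h1 := (hq (p t) (hppos t ht)).comp_hasDerivAt t (hpderiv t)
    have h2 : (LinearMap.toContinuousLinearMap (Matrix.diagonal (dq (p t))).mulVecLin) (x - y)
        = fun i => dq (p t) i * (x i - y i) := by
      funext i
      simp [Matrix.mulVecLin_apply, Matrix.mulVec_diagonal]
    rwa [h2] at h1
  have hcont : ∀ i : Fin n, ContinuousOn (fun t => dq (p t) i) (Set.Icc (0:ℝ) 1) := by
    intro i
    have h1 : ContinuousOn (fun t => dq (p t)) (Set.Icc (0:ℝ) 1) := by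
      apply hdqc.comp hpc.continuousOn
      intro t ht
      exact hppos t ht
    exact (continuous_apply i).comp_continuousOn h1
  have hint : ∀ i : Fin n, IntervalIntegrable (fun t => dq (p t) i) MeasureTheory.volume 0 1 := by
    intro i
    apply ContinuousOn.intervalIntegrable
    rw [Set.uIcc_of_le (zero_le_one : (0:ℝ) ≤ 1)]
    exact hcont i
  refine ⟨fun i => ∫ t in (0:ℝ)..1, dq (p t) i, fun i => ?_, fun i => ?_⟩
  · apply intervalIntegral.intervalIntegral_pos_of_pos_on (hint i)
    · intro t ht
      exact hdq _ (hppos t ⟨ht.1.le, ht.2.le⟩) i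
    · exact zero_lt_one
  · have hderiv_i : ∀ t ∈ Set.uIcc (0:ℝ) 1,
        HasDerivAt (fun t => q (p t) i) (dq (p t) i * (x i - y i)) t := by
      intro t ht
      rw [Set.uIcc_of_le zero_le_one] at ht
      exact hasDerivAt_pi.mp (hcomp t ht) i
    have hint_i : IntervalIntegrable (fun t => dq (p t) i * (x i - y i)) MeasureTheory.volume 0 1 :=
      (hint i).mul_const _
    have := intervalIntegral.integral_eq_sub_of_hasDerivAt hderiv_i hint_i
    rw [hp0, hp1] at this
    rw [← this, intervalIntegral.integral_mul_const]


/-- If `Γ` and `−Mᵀ` are compatible (all products of corresponding minors nonnegative),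
then for every positive diagonal `E`, every constant `c`, and every `C¹` function `q`
with positive diagonal Jacobian, the map `x ↦ Γ·E·exp(M·log x) − q(x) + c` is injective
on the positive orthant. -/
theorem stmt_17 (n m : ℕ) (Γ : Matrix (Fin n) (Fin m) ℝ) (M : Matrix (Fin m) (Fin n) ℝ)
    (hcompat : ∀ (k : ℕ) (α : Fin k → Fin n) (β : Fin k → Fin m), StrictMono α → StrictMono β →
      0 ≤ (Γ.submatrix α β).det * ((-M.transpose).submatrix α β).det)
    (E : Fin m → ℝ) (hE : ∀ j, 0 < E j) (c : Fin n → ℝ)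
    (q : (Fin n → ℝ) → (Fin n → ℝ)) (dq : (Fin n → ℝ) → (Fin n → ℝ))
    (hq : ∀ x, (∀ i, 0 < x i) →
      HasFDerivAt q (LinearMap.toContinuousLinearMap (Matrix.diagonal (dq x)).mulVecLin) x)
    (hdq : ∀ x, (∀ i, 0 < x i) → ∀ i, 0 < dq x i)
    (hdqc : ContinuousOn dq {x | ∀ i, 0 < x i}) :
    Set.InjOn
      (fun x => Γ.mulVec (fun j => E j * Real.exp (M.mulVec (fun i => Real.log (x i)) j))
        - q x + c)
      {x | ∀ i, 0 < x i} := by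
  intro a ha b hb hab
  simp only [Set.mem_setOf_eq] at ha hb
  set u : (Fin n → ℝ) → (Fin m → ℝ) := fun x => M.mulVec (fun i => Real.log (x i)) with hu_def
  set w : (Fin n → ℝ) → (Fin m → ℝ) := fun x j => E j * Real.exp (u x j) with hw_def
  -- slopes for exp
  have hexp : ∀ j, ∃ l : ℝ, 0 < l ∧ Real.exp (u a j) - Real.exp (u b j) = l * (u a j - u b j) :=
    fun j => slope_of_strictMonoOn (Real.exp_strictMono.strictMonoOn Set.univ)
      (Set.mem_univ _) (Set.mem_univ _)
  choose l hl hl2 using hexp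
  -- slopes for log
  have hlog : ∀ i, ∃ l : ℝ, 0 < l ∧ Real.log (a i) - Real.log (b i) = l * (a i - b i) :=
    fun i => slope_of_strictMonoOn Real.strictMonoOn_log
      (Set.mem_Ioi.mpr (ha i)) (Set.mem_Ioi.mpr (hb i))
  choose μ hμ hμ2 using hlog
  -- mean value for q
  obtain ⟨D, hD, hD2⟩ := qdiff q dq hq hdq hdqc a b ha hb
  set d₁ : Fin m → ℝ := fun j => E j * l j with hd₁
  have hd₁pos : ∀ j, 0 < d₁ j := fun j => mul_pos (hE j) (hl j)
  -- the basic vector identities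
  have hFab : Γ.mulVec (w a) - q a = Γ.mulVec (w b) - q b := by
    have := hab
    simp only at this
    calc Γ.mulVec (w a) - q a = (Γ.mulVec (w a) - q a + c) - c := by abel
      _ = (Γ.mulVec (w b) - q b + c) - c := by rw [this]
      _ = Γ.mulVec (w b) - q b := by abel
  have hΓdiff : Γ.mulVec (w a) - Γ.mulVec (w b) = q a - q b := by
    calc Γ.mulVec (w a) - Γ.mulVec (w b)
        = (Γ.mulVec (w a) - q a) - (Γ.mulVec (w b) - q b) + (q a - q b) := by abel
      _ = q a - q b := by rw [hFab]; abel
  have hw2 : w a - w b = (Matrix.diagonal d₁).mulVec (u a - u b) := by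
    funext j
    have : (Matrix.diagonal d₁).mulVec (u a - u b) j = d₁ j * (u a j - u b j) := by
      rw [Matrix.mulVec_diagonal]; rfl
    rw [this, hd₁]
    have := hl2 j
    simp only [Pi.sub_apply, hw_def]
    rw [← mul_sub, this]; ring
  have hu2 : u a - u b = M.mulVec ((Matrix.diagonal μ).mulVec (a - b)) := by
    have h1 : u a - u b = M.mulVec ((fun i => Real.log (a i)) - (fun i => Real.log (b i))) := by
      rw [hu_def]; simp only
      rw [Matrix.mulVec_sub]
    have h2v : ((fun i => Real.log (a i)) - (fun i => Real.log (b i)))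
        = (Matrix.diagonal μ).mulVec (a - b) := by
      funext i
      rw [Pi.sub_apply, Matrix.mulVec_diagonal]
      simpa using hμ2 i
    rw [h1, h2v]
  have hqd : q a - q b = (Matrix.diagonal D).mulVec (a - b) := by
    funext i
    rw [Matrix.mulVec_diagonal]
    simpa using hD2 i
  have hmain : (Matrix.diagonal D
      + (-Γ) * Matrix.diagonal d₁ * M * Matrix.diagonal μ).mulVec (a - b) = 0 := by
    rw [Matrix.add_mulVec]
    have h1 : Γ.mulVec (w a - w b)
        = (Γ * Matrix.diagonal d₁ * M * Matrix.diagonal μ).mulVec (a - b) := by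
      rw [hw2, hu2, Matrix.mulVec_mulVec, Matrix.mulVec_mulVec, Matrix.mulVec_mulVec]
    have h2 : Γ.mulVec (w a - w b) = q a - q b := by
      rw [Matrix.mulVec_sub]; exact hΓdiff
    have h3 : ((-Γ) * Matrix.diagonal d₁ * M * Matrix.diagonal μ)
        = -(Γ * Matrix.diagonal d₁ * M * Matrix.diagonal μ) := by
      simp [Matrix.neg_mul]
    rw [h3, Matrix.neg_mulVec, ← h1, h2, hqd]
    simp
  have hdet := keydet Γ M hcompat d₁ hd₁pos μ hμ D hD
  have hz : a - b = 0 := Matrix.eq_zero_of_mulVec_eq_zero (ne_of_gt hdet) hmain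
  exact sub_eq_zero.mp hz
end

section
/- Let Θ be the (signed) incidence matrix of a directed graph G without loops (column k corresponding to edge (i,j) has entry −1 in row i and +1 in row j), and write Θ_l for the matrix of negative parts (so (Θ_l)_{ik} = 1 if edge k leaves vertex i, else 0). If G is weakly reversible (every edge lies in a directed cycle), then there exists a positive diagonal matrix D such that −(Θ·D·Θ_lᵀ + Θ_l·D·Θᵀ) is positive semidefinite, and zᵀ·Θ·D·Θ_lᵀ·z < 0 for all z with Θᵀz ≠ 0. -/
/-- The (signed) incidence matrix of a directed graph with vertices `Fin ν` and
edges `Fin ε`: column `k` has `−1` in row `src k` and `+1` in row `tgt k`. -/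
def incMat {ν ε : ℕ} (src tgt : Fin ε → Fin ν) : Matrix (Fin ν) (Fin ε) ℝ :=
  Matrix.of fun i k => (if tgt k = i then (1 : ℝ) else 0) - (if src k = i then 1 else 0)

/-- The matrix of negative parts of the incidence matrix: `(Θ_l)_{ik} = 1` iff edge `k`
leaves vertex `i`. -/
def incMatL {ν ε : ℕ} (src : Fin ε → Fin ν) : Matrix (Fin ν) (Fin ε) ℝ :=
  Matrix.of fun i k => if src k = i then (1 : ℝ) else 0

lemma cycSucc_bijective (p : ℕ) (hp : 0 < p) :
    Function.Bijective (fun i : Fin p => (⟨((i : ℕ) + 1) % p, Nat.mod_lt _ hp⟩ : Fin p)) := by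
  refine Finite.injective_iff_bijective.mp ?_
  intro i j h
  simp only [Fin.mk.injEq] at h
  have hi := i.isLt; have hj := j.isLt
  have e1 : ((i : ℕ) + 1) % p = if (i : ℕ) + 1 = p then 0 else (i : ℕ) + 1 := by
    split
    · simp [*]
    · exact Nat.mod_eq_of_lt (by omega)
  have e2 : ((j : ℕ) + 1) % p = if (j : ℕ) + 1 = p then 0 else (j : ℕ) + 1 := by
    split
    · simp [*]
    · exact Nat.mod_eq_of_lt (by omega)
  rw [e1, e2] at h
  ext
  split at h <;> split at h <;> omega

lemma cycle_sum (p : ℕ) (hp : 0 < p) (a : Fin p → ℝ) :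
    ∑ i : Fin p, 2 * ((a ⟨((i : ℕ) + 1) % p, Nat.mod_lt _ hp⟩ - a i) * a i)
      = -∑ i : Fin p, (a ⟨((i : ℕ) + 1) % p, Nat.mod_lt _ hp⟩ - a i) ^ 2 := by
  have hsq : ∑ i : Fin p, a ⟨((i : ℕ) + 1) % p, Nat.mod_lt _ hp⟩ ^ 2 = ∑ i : Fin p, a i ^ 2 :=
    Fintype.sum_bijective _ (cycSucc_bijective p hp) _ _ (fun i => rfl)
  have key : ∀ b c : ℝ, 2 * ((b - c) * c) = (b ^ 2 - c ^ 2) - (b - c) ^ 2 := by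
    intros; ring
  simp_rw [key]
  rw [Finset.sum_sub_distrib, Finset.sum_sub_distrib, hsq]
  ring

lemma incMat_transpose_mulVec {ν ε : ℕ} (src tgt : Fin ε → Fin ν) (z : Fin ν → ℝ) (j : Fin ε) :
    ((incMat src tgt).transpose.mulVec z) j = z (tgt j) - z (src j) := by
  simp [incMat, Matrix.mulVec, dotProduct, Matrix.transpose_apply, sub_mul, ite_mul,
    Finset.sum_sub_distrib, Finset.sum_ite_eq]

lemma incMatL_transpose_mulVec {ν ε : ℕ} (src : Fin ε → Fin ν) (z : Fin ν → ℝ) (j : Fin ε) :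
    ((incMatL src).transpose.mulVec z) j = z (src j) := by
  simp [incMatL, Matrix.mulVec, dotProduct, Matrix.transpose_apply, ite_mul,
    Finset.sum_ite_eq]

lemma quad_eq {ν ε : ℕ} (A B : Matrix (Fin ν) (Fin ε) ℝ) (d : Fin ε → ℝ) (z : Fin ν → ℝ) :
    dotProduct z ((A * Matrix.diagonal d * B.transpose).mulVec z)
      = ∑ j, (A.transpose.mulVec z) j * (d j * (B.transpose.mulVec z) j) := by
  rw [← Matrix.mulVec_mulVec, ← Matrix.mulVec_mulVec, Matrix.dotProduct_mulVec]
  rw [show Matrix.vecMul z A = A.transpose.mulVec z by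
    rw [← Matrix.vecMul_transpose, Matrix.transpose_transpose]]
  simp [dotProduct, Matrix.mulVec_diagonal]


/-- If the directed graph (without loops) is weakly reversible (every edge lies on a
directed cycle), then there is a positive diagonal `D` with
`−(Θ·D·Θ_lᵀ + Θ_l·D·Θᵀ)` positive semidefinite and `zᵀ·Θ·D·Θ_lᵀ·z < 0` whenever
`Θᵀz ≠ 0`. -/
theorem stmt_18 (ν ε : ℕ) (src tgt : Fin ε → Fin ν) (hloop : ∀ k, src k ≠ tgt k)
    (hWR : ∀ k : Fin ε, ∃ (p : ℕ) (hp : 0 < p) (e : Fin p → Fin ε),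
      e ⟨0, hp⟩ = k ∧
      ∀ i : Fin p, tgt (e i) = src (e ⟨((i : ℕ) + 1) % p, Nat.mod_lt _ hp⟩)) :
    ∃ d : Fin ε → ℝ, (∀ k, 0 < d k) ∧
      (∀ z : Fin ν → ℝ,
        dotProduct z
          ((incMat src tgt * Matrix.diagonal d * (incMatL src).transpose +
            incMatL src * Matrix.diagonal d * (incMat src tgt).transpose).mulVec z) ≤ 0) ∧
      (∀ z : Fin ν → ℝ, (incMat src tgt).transpose.mulVec z ≠ 0 →
        dotProduct z
          ((incMat src tgt * Matrix.diagonal d * (incMatL src).transpose).mulVec z) < 0) := by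
  choose p hp e h0 hcyc using hWR
  set d : Fin ε → ℝ := fun j => ∑ k, ∑ i : Fin (p k), if e k i = j then (1 : ℝ) else 0 with hd
  -- positivity of d
  have hinner_nonneg : ∀ j k : Fin ε, (0 : ℝ) ≤ ∑ i : Fin (p k), if e k i = j then (1 : ℝ) else 0 :=
    fun j k => Finset.sum_nonneg fun i _ => by positivity
  have hdpos : ∀ j, 0 < d j := by
    intro j
    have h1 : (1 : ℝ) ≤ ∑ i : Fin (p j), if e j i = j then (1 : ℝ) else 0 := by
      have := Finset.single_le_sum (f := fun i : Fin (p j) => if e j i = j then (1 : ℝ) else 0)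
        (fun i _ => by positivity) (Finset.mem_univ ⟨0, hp j⟩)
      simpa [h0 j] using this
    have h2 := Finset.single_le_sum
      (f := fun k : Fin ε => ∑ i : Fin (p k), if e k i = j then (1 : ℝ) else 0)
      (fun k _ => hinner_nonneg j k) (Finset.mem_univ j)
    rw [hd]; dsimp only; linarith
  -- sum exchange
  have hd_sum : ∀ f : Fin ε → ℝ, ∑ j, d j * f j = ∑ k, ∑ i : Fin (p k), f (e k i) := by
    intro f
    simp only [hd, Finset.sum_mul, ite_mul, one_mul, zero_mul]
    rw [Finset.sum_comm]
    refine Finset.sum_congr rfl fun k _ => ?_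
    rw [Finset.sum_comm]
    refine Finset.sum_congr rfl fun i _ => ?_
    simp [Finset.sum_ite_eq]
  -- quadratic forms
  have hq1 : ∀ z : Fin ν → ℝ,
      dotProduct z
        ((incMat src tgt * Matrix.diagonal d * (incMatL src).transpose).mulVec z)
      = ∑ j, d j * ((z (tgt j) - z (src j)) * z (src j)) := by
    intro z
    rw [quad_eq]
    refine Finset.sum_congr rfl fun j _ => ?_
    rw [incMat_transpose_mulVec, incMatL_transpose_mulVec]; ring
  have hq2 : ∀ z : Fin ν → ℝ,
      dotProduct z
        ((incMatL src * Matrix.diagonal d * (incMat src tgt).transpose).mulVec z)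
      = ∑ j, d j * ((z (tgt j) - z (src j)) * z (src j)) := by
    intro z
    rw [quad_eq]
    refine Finset.sum_congr rfl fun j _ => ?_
    rw [incMat_transpose_mulVec, incMatL_transpose_mulVec]; ring
  -- per-cycle identity
  have hcycle : ∀ (z : Fin ν → ℝ) (k : Fin ε),
      ∑ i : Fin (p k), 2 * ((z (tgt (e k i)) - z (src (e k i))) * z (src (e k i)))
      = -∑ i : Fin (p k),
          (z (src (e k ⟨((i : ℕ) + 1) % p k, Nat.mod_lt _ (hp k)⟩)) - z (src (e k i))) ^ 2 := by
    intro z k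
    have := cycle_sum (p k) (hp k) (fun i => z (src (e k i)))
    rw [← this]
    refine Finset.sum_congr rfl fun i _ => ?_
    rw [hcyc k i]
  have hkey : ∀ z : Fin ν → ℝ,
      2 * (∑ j, d j * ((z (tgt j) - z (src j)) * z (src j)))
      = -∑ k, ∑ i : Fin (p k),
          (z (src (e k ⟨((i : ℕ) + 1) % p k, Nat.mod_lt _ (hp k)⟩)) - z (src (e k i))) ^ 2 := by
    intro z
    rw [Finset.mul_sum]
    have : ∀ j, 2 * (d j * ((z (tgt j) - z (src j)) * z (src j)))
        = d j * (2 * ((z (tgt j) - z (src j)) * z (src j))) := fun j => by ring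
    simp_rw [this]
    rw [hd_sum (fun j => 2 * ((z (tgt j) - z (src j)) * z (src j)))]
    rw [← Finset.sum_neg_distrib]
    exact Finset.sum_congr rfl fun k _ => hcycle z k
  refine ⟨d, hdpos, ?_, ?_⟩
  · intro z
    rw [Matrix.add_mulVec, dotProduct_add, hq1 z, hq2 z]
    have h := hkey z
    have hnn : (0:ℝ) ≤ ∑ k, ∑ i : Fin (p k),
        (z (src (e k ⟨((i : ℕ) + 1) % p k, Nat.mod_lt _ (hp k)⟩)) - z (src (e k i))) ^ 2 :=
      Finset.sum_nonneg fun k _ => Finset.sum_nonneg fun i _ => sq_nonneg _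
    linarith
  · intro z hz
    rw [hq1 z]
    obtain ⟨j, hj⟩ := Function.ne_iff.mp hz
    rw [incMat_transpose_mulVec] at hj
    have hj' : z (tgt j) - z (src j) ≠ 0 := by simpa using hj
    set S : Fin ε → ℝ := fun k => ∑ i : Fin (p k),
        (z (src (e k ⟨((i : ℕ) + 1) % p k, Nat.mod_lt _ (hp k)⟩)) - z (src (e k i))) ^ 2 with hS
    have hSnn : ∀ k, 0 ≤ S k := fun k => Finset.sum_nonneg fun i _ => sq_nonneg _
    have hSj : 0 < S j := by
      have hterm : (z (src (e j ⟨((((⟨0, hp j⟩ : Fin (p j)) : ℕ)) + 1) % p j,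
          Nat.mod_lt _ (hp j)⟩)) - z (src (e j ⟨0, hp j⟩))) ^ 2
          = (z (tgt j) - z (src j)) ^ 2 := by
        rw [← hcyc j ⟨0, hp j⟩, h0 j]
      have hle := Finset.single_le_sum
        (f := fun i : Fin (p j) => (z (src (e j ⟨((i : ℕ) + 1) % p j, Nat.mod_lt _ (hp j)⟩))
          - z (src (e j i))) ^ 2)
        (fun i _ => sq_nonneg _) (Finset.mem_univ (⟨0, hp j⟩ : Fin (p j)))
      have hpos : (0:ℝ) < (z (tgt j) - z (src j)) ^ 2 := by positivity
      rw [hS]; dsimp only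
      calc (0:ℝ) < (z (tgt j) - z (src j)) ^ 2 := hpos
        _ = _ := hterm.symm
        _ ≤ _ := hle
    have hle2 : S j ≤ ∑ k, S k :=
      Finset.single_le_sum (fun k _ => hSnn k) (Finset.mem_univ j)
    have h := hkey z
    have hsum : (∑ k, S k) = ∑ k : Fin ε, ∑ i : Fin (p k),
        (z (src (e k ⟨((i : ℕ) + 1) % p k, Nat.mod_lt _ (hp k)⟩)) - z (src (e k i))) ^ 2 := rfl
    linarith
end
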